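/- arXiv:2605.14613 — 7 statements merged into one kernel-verified Lean document; each statement's English description precedes it below -/
import Mathlib

section
/- For every n ≥ 1, the Munarini graph M_{n,1} is isomorphic to the Fibonacci cube Γ_{n−1}. -/
/-- The `k`-Fibonacci numbers: `F_{0,k} = 0`, `F_{1,k} = 1`,
`F_{n,k} = k·F_{n-1,k} + F_{n-2,k}`. -/
def kFib (k : ℕ) : ℕ → ℕ
  | 0 => 0
  | 1 => 1
  | n + 2 => k * kFib k (n + 1) + kFib k n

/-- `k`-generalized Pell strings: strings over the alphabet `{0,…,k}` in which every
maximal run of the letter `k` has even length (equivalently, elements of the monoid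
generated by `0,…,k-1` and `kk`). -/
inductive GenPell (k : ℕ) : List ℕ → Prop
  | nil : GenPell k []
  | cons (i : ℕ) (s : List ℕ) : i < k → GenPell k s → GenPell k (i :: s)
  | kk (s : List ℕ) : GenPell k s → GenPell k (k :: k :: s)

/-- Vertices of the Munarini graph `M_{n,k}`: `k`-generalized Pell strings of length `n`. -/
abbrev PellVtx (n k : ℕ) := {s : List ℕ // s.length = n ∧ GenPell k s}

/-- Elementary Munarini move: replace one `0` by some `i ∈ {1,…,k-1}`, or replace a
substring `00` by `kk`. -/
def munariniRel (k : ℕ) (u v : List ℕ) : Prop :=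
  (∃ a b : List ℕ, ∃ i : ℕ, 0 < i ∧ i < k ∧ u = a ++ 0 :: b ∧ v = a ++ i :: b) ∨
  (∃ a b : List ℕ, u = a ++ 0 :: 0 :: b ∧ v = a ++ k :: k :: b)

/-- The Munarini graph `M_{n,k}`. -/
def MunariniGraph (n k : ℕ) : SimpleGraph (PellVtx n k) :=
  SimpleGraph.fromRel fun u v => munariniRel k u.val v.val

/-- Elementary move of the generalized Pell graph: replace one `i ∈ {0,…,k-2}` by `i+1`,
or replace a substring `(k-1)(k-1)` by `kk`. -/
def piRel (k : ℕ) (u v : List ℕ) : Prop :=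
  (∃ a b : List ℕ, ∃ i : ℕ, i < k - 1 ∧ u = a ++ i :: b ∧ v = a ++ (i + 1) :: b) ∨
  (∃ a b : List ℕ, u = a ++ (k - 1) :: (k - 1) :: b ∧ v = a ++ k :: k :: b)

/-- The generalized Pell graph `Π_{n,k}`. -/
def PiGraph (n k : ℕ) : SimpleGraph (PellVtx n k) :=
  SimpleGraph.fromRel fun u v => piRel k u.val v.val

/-- Two binary strings differ in exactly one coordinate (oriented version: `u` has a `false`
where `v` has a `true`, all other coordinates agree). -/
def diffOne (u v : List Bool) : Prop :=
  ∃ a b : List Bool, u = a ++ false :: b ∧ v = a ++ true :: b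

/-- The hypercube `Q_m` on binary strings of length `m`; two strings are adjacent iff
they differ in exactly one coordinate. -/
def QCube (m : ℕ) : SimpleGraph {s : List Bool // s.length = m} :=
  SimpleGraph.fromRel fun u v => diffOne u.val v.val

/-- A Fibonacci string: a binary string with no two consecutive `true`s. -/
def FibStr (s : List Bool) : Prop := List.Chain' (fun a b => ¬(a = true ∧ b = true)) s

/-- The Fibonacci cube `Γ_m`: the subgraph of `Q_m` induced by Fibonacci strings. -/
def FibCube (m : ℕ) : SimpleGraph {s : List Bool // s.length = m ∧ FibStr s} :=
  SimpleGraph.fromRel fun u v => diffOne u.val v.val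

/-- The binary block `A_i` of length `k`: `A_0 = 0^k` and `A_i = 0^{i-1} 1 0^{k-i}`
for `1 ≤ i ≤ k`. -/
def blockA (k i : ℕ) : List Bool :=
  if i = 0 then List.replicate k false
  else List.replicate (i - 1) false ++ true :: List.replicate (k - i) false

/-- Munarini strings: concatenations of blocks `A_0,…,A_k` in which every block `A_k`
is immediately followed by a block `A_0`. -/
inductive MunariniStr (k : ℕ) : List Bool → Prop
  | nil : MunariniStr k []
  | block (i : ℕ) (s : List Bool) : i < k → MunariniStr k s →
      MunariniStr k (blockA k i ++ s)
  | kblock (s : List Bool) : MunariniStr k s →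
      MunariniStr k (blockA k k ++ (blockA k 0 ++ s))

/-- Vertices of `Γ*_{n,k}`: Munarini strings of length `k·n`. -/
abbrev MunStrVtx (n k : ℕ) := {s : List Bool // s.length = k * n ∧ MunariniStr k s}

/-- `Γ*_{n,k}`: the subgraph of the hypercube `Q_{kn}` induced by Munarini strings. -/
def GammaStar (n k : ℕ) : SimpleGraph (MunStrVtx n k) :=
  SimpleGraph.fromRel fun u v => diffOne u.val v.val

/-- The map `Ψ̂`, replacing each letter `i ∈ {0,…,k-1}` by the block `A_i` and each
substring `kk` by `A_k A_0`. -/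
def psi (k : ℕ) : List ℕ → List Bool
  | [] => []
  | [i] => blockA k i
  | i :: j :: s =>
      if i = k then blockA k k ++ (blockA k 0 ++ psi k s)
      else blockA k i ++ psi k (j :: s)

/-- Coordinatewise majority of three binary strings. -/
def maj3 : List Bool → List Bool → List Bool → List Bool
  | a :: u, b :: v, c :: w => ((a && b) || (a && c) || (b && c)) :: maj3 u v w
  | _, _, _ => []

/-- The weight of a `(k+1)`-ary string: `w(u) = Σ_{i=1}^{k-1} |u|_i + |u|_k / 2`. -/
def pweight (k : ℕ) (u : List ℕ) : ℕ :=
  u.countP (fun a => decide (0 < a ∧ a < k)) + u.count k / 2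

/-- Words over `{0,…,2k}` where every maximal run of `0`s and every maximal run of `1`s
has even length. -/
inductive EvenRuns01 (k : ℕ) : List ℕ → Prop
  | nil : EvenRuns01 k []
  | cons (i : ℕ) (s : List ℕ) : 2 ≤ i → i ≤ 2 * k → EvenRuns01 k s → EvenRuns01 k (i :: s)
  | zz (s : List ℕ) : EvenRuns01 k s → EvenRuns01 k (0 :: 0 :: s)
  | oo (s : List ℕ) : EvenRuns01 k s → EvenRuns01 k (1 :: 1 :: s)

/-- The number of maximal induced hypercubes of dimension `p` in a graph `G`:
vertex subsets inducing a subgraph isomorphic to `Q_p` that are not properly contained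
in any vertex subset inducing a hypercube. -/
noncomputable def maxCubeCount {V : Type} (G : SimpleGraph V) (p : ℕ) : ℕ :=
  {S : Set V | Nonempty (G.induce S ≃g QCube p) ∧
      ∀ T : Set V, S ⊆ T → (∃ q : ℕ, Nonempty (G.induce T ≃g QCube q)) → T = S}.ncard


/-- Map a 1-generalized Pell string to a binary string: `0 ↦ false`, `11 ↦ true false`. -/
def phiM : List ℕ → List Bool
  | [] => []
  | 0 :: s => false :: phiM s
  | (_+1) :: [] => [true, false]
  | (_+1) :: _ :: s => true :: false :: phiM s

/-- Inverse map. -/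
def thetaM : List Bool → List ℕ
  | [] => []
  | false :: s => 0 :: thetaM s
  | true :: [] => [1, 1]
  | true :: _ :: s => 1 :: 1 :: thetaM s

/-- Binary strings in which every `true` is immediately followed by a `false`. -/
inductive GoodB : List Bool → Prop
  | nil : GoodB []
  | f (s : List Bool) : GoodB s → GoodB (false :: s)
  | tf (s : List Bool) : GoodB s → GoodB (true :: false :: s)

@[simp] lemma phiM_nil : phiM [] = [] := rfl
@[simp] lemma phiM_zero (s : List ℕ) : phiM (0 :: s) = false :: phiM s := rfl
@[simp] lemma phiM_oo (s : List ℕ) : phiM (1 :: 1 :: s) = true :: false :: phiM s := rfl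
@[simp] lemma thetaM_nil : thetaM [] = [] := rfl
@[simp] lemma thetaM_f (s : List Bool) : thetaM (false :: s) = 0 :: thetaM s := rfl
@[simp] lemma thetaM_tf (s : List Bool) : thetaM (true :: false :: s) = 1 :: 1 :: thetaM s := rfl

lemma phiM_length {u : List ℕ} (h : GenPell 1 u) : (phiM u).length = u.length := by
  induction h with
  | nil => rfl
  | cons i s hi _ ih => interval_cases i; simp [ih]
  | kk s _ ih => simp [ih]

lemma phiM_good {u : List ℕ} (h : GenPell 1 u) : GoodB (phiM u) := by
  induction h with
  | nil => exact GoodB.nil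
  | cons i s hi _ ih => interval_cases i; simpa using GoodB.f _ ih
  | kk s _ ih => simpa using GoodB.tf _ ih

lemma thetaM_phiM {u : List ℕ} (h : GenPell 1 u) : thetaM (phiM u) = u := by
  induction h with
  | nil => rfl
  | cons i s hi _ ih => interval_cases i; simp [ih]
  | kk s _ ih => simp [ih]

lemma phiM_append {a : List ℕ} (h : GenPell 1 a) (s : List ℕ) :
    phiM (a ++ s) = phiM a ++ phiM s := by
  induction h with
  | nil => rfl
  | cons i t hi _ ih => interval_cases i; simp [ih]
  | kk t _ ih => simp [ih]

lemma phiM_concat {u : List ℕ} (h : GenPell 1 u) (hne : u ≠ []) :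
    ∃ w, phiM u = w ++ [false] := by
  induction h with
  | nil => exact absurd rfl hne
  | cons i s hi hs ih =>
    interval_cases i
    rcases s with _ | ⟨x, s⟩
    · exact ⟨[], rfl⟩
    · obtain ⟨w, hw⟩ := ih (by simp)
      exact ⟨false :: w, by simp [hw]⟩
  | kk s hs ih =>
    rcases s with _ | ⟨x, s⟩
    · exact ⟨[true], rfl⟩
    · obtain ⟨w, hw⟩ := ih (by simp)
      exact ⟨true :: false :: w, by simp [hw]⟩

lemma phiM_dropLast {u : List ℕ} (h : GenPell 1 u) (hne : u ≠ []) :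
    (phiM u).dropLast ++ [false] = phiM u := by
  obtain ⟨w, hw⟩ := phiM_concat h hne
  rw [hw, List.dropLast_concat]

lemma thetaM_length {w : List Bool} (h : GoodB w) : (thetaM w).length = w.length := by
  induction h with
  | nil => rfl
  | f s _ ih => simp [ih]
  | tf s _ ih => simp [ih]

lemma thetaM_pell {w : List Bool} (h : GoodB w) : GenPell 1 (thetaM w) := by
  induction h with
  | nil => exact GenPell.nil
  | f s _ ih => exact GenPell.cons 0 _ one_pos ih
  | tf s _ ih => exact GenPell.kk _ ih

lemma phiM_thetaM {w : List Bool} (h : GoodB w) : phiM (thetaM w) = w := by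
  induction h with
  | nil => rfl
  | f s _ ih => simp [ih]
  | tf s _ ih => simp [ih]

lemma thetaM_append {x : List Bool} (h : GoodB x) (s : List Bool) :
    thetaM (x ++ s) = thetaM x ++ thetaM s := by
  induction h with
  | nil => rfl
  | f t _ ih => simp [ih]
  | tf t _ ih => simp [ih]

lemma goodB_fibStr {w : List Bool} (h : GoodB w) : FibStr w := by
  induction h with
  | nil => exact List.isChain_nil
  | f s _ ih =>
    rcases s with _ | ⟨x, s⟩
    · simp [FibStr, List.Chain']
    · exact List.IsChain.cons_cons (by simp) ih
  | tf s _ ih =>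
    refine List.IsChain.cons_cons (by simp) ?_
    rcases s with _ | ⟨x, s⟩
    · simp [FibStr, List.Chain']
    · exact List.IsChain.cons_cons (by simp) ih

lemma fibStr_goodB : ∀ t : List Bool, FibStr t → GoodB (t ++ [false])
  | [], _ => GoodB.f _ GoodB.nil
  | false :: s, h => GoodB.f _ (fibStr_goodB s h.tail)
  | [true], _ => GoodB.tf _ GoodB.nil
  | true :: true :: s, h => by
    exact absurd (List.isChain_cons_cons.mp h).1 (by simp)
  | true :: false :: s, h => GoodB.tf _ (fibStr_goodB s ((h.tail).tail))

lemma goodB_split {w : List Bool} (h : GoodB w) :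
    ∀ p r, w = p ++ true :: r → GoodB p ∧ ∃ r', r = false :: r' ∧ GoodB r' := by
  induction h with
  | nil => intro p r hp; exact absurd hp (by simp)
  | f s _ ih =>
    intro p r hp
    rcases p with _ | ⟨x, p⟩
    · simp at hp
    · obtain ⟨h1, h2⟩ : x = false ∧ s = p ++ true :: r := by simpa using hp
      obtain ⟨hg, r', hr⟩ := ih p r h2
      exact ⟨h1 ▸ GoodB.f _ hg, r', hr⟩
  | tf s _ ih =>
    intro p r hp
    rcases p with _ | ⟨x, _ | ⟨y, p⟩⟩
    · obtain ⟨-, h2⟩ : True ∧ false :: s = r := by simpa using hp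
      exact ⟨GoodB.nil, s, h2.symm, by assumption⟩
    · exfalso
      have : (false : Bool) = true := by
        have := hp
        simp only [List.cons.injEq, List.singleton_append] at this
        exact this.2.1
      simp at this
    · obtain ⟨h1, h2, h3⟩ : x = true ∧ y = false ∧ s = p ++ true :: r := by simpa using hp
      obtain ⟨hg, r', hr⟩ := ih p r h3
      exact ⟨h1 ▸ h2 ▸ GoodB.tf _ hg, r', hr⟩

lemma pell_split {u : List ℕ} (h : GenPell 1 u) :
    ∀ a s, u = a ++ 0 :: s → GenPell 1 a ∧ GenPell 1 s := by
  induction h with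
  | nil => intro a s hp; exact absurd hp (by simp)
  | cons i t hi _ ih =>
    interval_cases i
    intro a s hp
    rcases a with _ | ⟨x, a⟩
    · obtain ⟨-, h2⟩ : True ∧ t = s := by simpa using hp
      exact ⟨GenPell.nil, h2 ▸ (by assumption)⟩
    · obtain ⟨h1, h2⟩ : (0 : ℕ) = x ∧ t = a ++ 0 :: s := by simpa using hp
      obtain ⟨hg, hs⟩ := ih a s h2
      exact ⟨h1 ▸ GenPell.cons 0 _ one_pos hg, hs⟩
  | kk t _ ih =>
    intro a s hp
    rcases a with _ | ⟨x, _ | ⟨y, a⟩⟩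
    · simp at hp
    · simp at hp
    · obtain ⟨h1, h2, h3⟩ : (1 : ℕ) = x ∧ (1 : ℕ) = y ∧ t = a ++ 0 :: s := by simpa using hp
      obtain ⟨hg, hs⟩ := ih a s h3
      exact ⟨h1 ▸ h2 ▸ GenPell.kk _ hg, hs⟩

lemma central {u v : List ℕ} (hu : GenPell 1 u) (hv : GenPell 1 v)
    (hun : u ≠ []) (hvn : v ≠ []) :
    munariniRel 1 u v ↔ diffOne (phiM u).dropLast (phiM v).dropLast := by
  constructor
  · rintro (⟨a, b, i, h1, h2, -⟩ | ⟨a, b, h1, h2⟩)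
    · omega
    · obtain ⟨hga, -⟩ := pell_split hu a (0 :: b) h1
      refine ⟨phiM a, (false :: phiM b).dropLast, ?_, ?_⟩
      · rw [h1, phiM_append hga, phiM_zero, phiM_zero]
        rw [List.dropLast_append_cons]
        rfl
      · rw [h2, phiM_append hga, phiM_oo]
        rw [List.dropLast_append_cons]
        rfl
  · rintro ⟨p, q, h1, h2⟩
    have hu' : phiM u = p ++ false :: (q ++ [false]) := by
      rw [← phiM_dropLast hu hun, h1]; simp
    have hv' : phiM v = p ++ true :: (q ++ [false]) := by
      rw [← phiM_dropLast hv hvn, h2]; simp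
    obtain ⟨hgp, r', hr', hgr⟩ := goodB_split (phiM_good hv) p (q ++ [false]) hv'
    right
    refine ⟨thetaM p, thetaM r', ?_, ?_⟩
    · rw [← thetaM_phiM hu, hu', hr', thetaM_append hgp]; simp
    · rw [← thetaM_phiM hv, hv', hr', thetaM_append hgp]; simp

/-- For every `n ≥ 1`, the Munarini graph `M_{n,1}` is isomorphic to the
Fibonacci cube `Γ_{n-1}`. -/
theorem munarini_one_iso_fibCube (n : ℕ) (hn : 1 ≤ n) :
    Nonempty (MunariniGraph n 1 ≃g FibCube (n - 1)) := by
  have hne : ∀ u : PellVtx n 1, u.val ≠ [] := fun u h => by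
    have hl := u.prop.1
    rw [h] at hl
    simp at hl
    omega
  let e : PellVtx n 1 ≃ {s : List Bool // s.length = n - 1 ∧ FibStr s} :=
    { toFun := fun u => ⟨(phiM u.val).dropLast, by
        refine ⟨?_, ?_⟩
        · rw [List.length_dropLast, phiM_length u.prop.2, u.prop.1]
        · exact List.IsChain.prefix (goodB_fibStr (phiM_good u.prop.2))
            (List.dropLast_prefix _)⟩
      invFun := fun t => ⟨thetaM (t.val ++ [false]), by
        have hg := fibStr_goodB t.val t.prop.2
        refine ⟨?_, thetaM_pell hg⟩
        rw [thetaM_length hg, List.length_append, t.prop.1]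
        simp; omega⟩
      left_inv := fun u => Subtype.ext (by
        simp only
        rw [phiM_dropLast u.prop.2 (hne u), thetaM_phiM u.prop.2])
      right_inv := fun t => Subtype.ext (by
        simp only
        rw [phiM_thetaM (fibStr_goodB t.val t.prop.2), List.dropLast_concat]) }
  refine ⟨⟨e, ?_⟩⟩
  intro u v
  show (FibCube (n - 1)).Adj (e u) (e v) ↔ (MunariniGraph n 1).Adj u v
  simp only [MunariniGraph, FibCube, SimpleGraph.fromRel_adj]
  constructor
  · rintro ⟨h0, h | h⟩
    · exact ⟨fun hh => h0 (congrArg e hh),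
        Or.inl ((central u.prop.2 v.prop.2 (hne u) (hne v)).mpr h)⟩
    · exact ⟨fun hh => h0 (congrArg e hh),
        Or.inr ((central v.prop.2 u.prop.2 (hne v) (hne u)).mpr h)⟩
  · rintro ⟨h0, h | h⟩
    · exact ⟨fun hh => h0 (e.injective hh),
        Or.inl ((central u.prop.2 v.prop.2 (hne u) (hne v)).mp h)⟩
    · exact ⟨fun hh => h0 (e.injective hh),
        Or.inr ((central v.prop.2 u.prop.2 (hne v) (hne u)).mp h)⟩
end

section
/- For every k ≥ 1, the number of edges of the Munarini graph satisfies |E(M_{0,k})| = 0, |E(M_{1,k})| = k − 1, and for all n ≥ 2, |E(M_{n,k})| = k·|E(M_{n−1,k})| + |E(M_{n−2,k})| + F_{n+1,k} − F_{n,k}. -/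
namespace MunariniAux

lemma genPell_cons {k x : ℕ} {s : List ℕ} (h : GenPell k (x :: s)) :
    (x < k ∧ GenPell k s) ∨ (x = k ∧ ∃ t, s = k :: t ∧ GenPell k t) := by
  cases h with
  | cons i s hi hs => exact Or.inl ⟨hi, hs⟩
  | kk s hs => exact Or.inr ⟨rfl, s, rfl, hs⟩

lemma genPell_cons_lt {k x : ℕ} {s : List ℕ} (hx : x < k) (h : GenPell k (x :: s)) :
    GenPell k s := by
  rcases genPell_cons h with ⟨_, hs⟩ | ⟨hxk, _⟩
  · exact hs
  · omega

lemma genPell_kk {k : ℕ} {s : List ℕ} (h : GenPell k (k :: s)) :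
    ∃ t, s = k :: t ∧ GenPell k t := by
  rcases genPell_cons h with ⟨hlt, _⟩ | ⟨_, ht⟩
  · omega
  · exact ht

lemma genPell_bdd {k : ℕ} {s : List ℕ} (h : GenPell k s) : ∀ x ∈ s, x ≤ k := by
  induction h with
  | nil => simp
  | cons i s hi hs ih =>
    intro x hx; rcases List.mem_cons.mp hx with rfl | hx
    · omega
    · exact ih x hx
  | kk s hs ih =>
    intro x hx
    rcases List.mem_cons.mp hx with rfl | hx
    · exact le_refl _
    · rcases List.mem_cons.mp hx with rfl | hx
      · exact le_refl _
      · exact ih x hx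

lemma finite_bdd (k n : ℕ) : {l : List ℕ | l.length = n ∧ ∀ x ∈ l, x ≤ k}.Finite := by
  induction n with
  | zero =>
    apply Set.Finite.subset (Set.finite_singleton ([] : List ℕ))
    rintro l ⟨hl, -⟩
    simp [List.length_eq_zero_iff.mp hl]
  | succ n ih =>
    apply Set.Finite.subset (Set.Finite.image2 (fun a t => a :: t) (Set.finite_Iic k) ih)
    rintro l ⟨hl, hb⟩
    cases l with
    | nil => simp at hl
    | cons a t =>
      exact ⟨a, hb a (by simp), t, ⟨by simpa using hl, fun x hx => hb x (by simp [hx])⟩, rfl⟩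

instance instFinitePellVtx (n k : ℕ) : Finite (PellVtx n k) := by
  have : {s : List ℕ | s.length = n ∧ GenPell k s}.Finite := by
    apply (finite_bdd k n).subset
    rintro s ⟨h1, h2⟩
    exact ⟨h1, genPell_bdd h2⟩
  exact this.to_subtype

end MunariniAux
namespace MunariniAux

lemma rel_count {k : ℕ} (hk : 1 ≤ k) {u v : List ℕ} (h : munariniRel k u v) :
    v.count 0 < u.count 0 := by
  have hk0 : k ≠ 0 := by omega
  rcases h with ⟨a, b, i, hi0, hik, hu, hv⟩ | ⟨a, b, hu, hv⟩ <;> subst hu <;> subst hv <;>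
    simp [List.count_append, List.count_cons, hk0] <;> omega

lemma rel_cons {k x : ℕ} {u v : List ℕ} (h : munariniRel k u v) :
    munariniRel k (x :: u) (x :: v) := by
  rcases h with ⟨a, b, i, hi0, hik, hu, hv⟩ | ⟨a, b, hu, hv⟩
  · exact Or.inl ⟨x :: a, b, i, hi0, hik, by simp [hu], by simp [hv]⟩
  · exact Or.inr ⟨x :: a, b, by simp [hu], by simp [hv]⟩

abbrev OEdge (n k : ℕ) : Type :=
  {p : PellVtx n k × PellVtx n k // munariniRel k p.1.val p.2.val}

/-- vertex decomposition map -/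
def vmap (k m : ℕ) : (Fin k × PellVtx (m + 1) k) ⊕ PellVtx m k → PellVtx (m + 2) k
  | Sum.inl (i, ⟨s, hs⟩) => ⟨(i : ℕ) :: s, by simp [hs.1], GenPell.cons _ _ i.isLt hs.2⟩
  | Sum.inr ⟨s, hs⟩ => ⟨k :: k :: s, by simp [hs.1], GenPell.kk s hs.2⟩

lemma vmap_bij (k m : ℕ) : Function.Bijective (vmap k m) := by
  constructor
  · rintro (⟨i, s, hs⟩ | ⟨s, hs⟩) (⟨j, t, ht⟩ | ⟨t, ht⟩) h <;>
      simp only [vmap, Subtype.mk.injEq, List.cons.injEq] at h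
    · obtain ⟨h1, h2⟩ := h
      subst h2
      simp [Fin.ext_iff, h1]
    · exact absurd h.1 (by omega : (i : ℕ) ≠ k)
    · exact absurd h.1 (by omega : (k : ℕ) ≠ j)
    · obtain ⟨-, -, h⟩ := h
      subst h
      rfl
  · rintro ⟨l, hl, hg⟩
    match l, hl with
    | x :: s, hl =>
      rcases genPell_cons hg with ⟨hx, hs⟩ | ⟨rfl, t, rfl, ht⟩
      · exact ⟨Sum.inl (⟨x, hx⟩, ⟨s, by simpa using hl, hs⟩), rfl⟩
      · exact ⟨Sum.inr ⟨t, by simpa using hl, ht⟩, rfl⟩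

lemma card_pellVtx (k : ℕ) : ∀ n, Nat.card (PellVtx n k) = kFib k (n + 1)
  | 0 => by
    have : ∀ p : PellVtx 0 k, p = ⟨[], rfl, GenPell.nil⟩ := by
      rintro ⟨l, hl, hg⟩
      cases List.length_eq_zero_iff.mp hl
      rfl
    haveI : Unique (PellVtx 0 k) := ⟨⟨⟨[], rfl, GenPell.nil⟩⟩, this⟩
    simp [kFib, Nat.card_unique]
  | 1 => by
    have hb : Function.Bijective (fun i : Fin k => (⟨[(i : ℕ)],
        by simp, GenPell.cons _ _ i.isLt GenPell.nil⟩ : PellVtx 1 k)) := by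
      constructor
      · intro i j h
        simp only [Subtype.mk.injEq, List.cons.injEq] at h
        exact Fin.ext h.1
      · rintro ⟨l, hl, hg⟩
        match l, hl with
        | [x], hl =>
          rcases genPell_cons hg with ⟨hx, -⟩ | ⟨rfl, t, ht, -⟩
          · exact ⟨⟨x, hx⟩, rfl⟩
          · simp at ht
    rw [← Nat.card_eq_of_bijective _ hb]
    simp [kFib]
  | n + 2 => by
    rw [← Nat.card_eq_of_bijective _ (vmap_bij k n), Nat.card_sum, Nat.card_prod,
      card_pellVtx k (n + 1), card_pellVtx k n]
    simp [kFib, Nat.card_eq_fintype_card]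

end MunariniAux
namespace MunariniAux

lemma rel_cases {k : ℕ} (hk : 1 ≤ k) {u v : List ℕ} (hu : GenPell k u) (hv : GenPell k v)
    (h : munariniRel k u v) :
    (∃ s i, 0 < i ∧ i < k ∧ u = 0 :: s ∧ v = i :: s ∧ GenPell k s) ∨
    (∃ s, u = 0 :: 0 :: s ∧ v = k :: k :: s ∧ GenPell k s) ∨
    (∃ x u' v', x < k ∧ u = x :: u' ∧ v = x :: v' ∧ GenPell k u' ∧ GenPell k v' ∧
      munariniRel k u' v') ∨
    (∃ u' v', u = k :: k :: u' ∧ v = k :: k :: v' ∧ GenPell k u' ∧ GenPell k v' ∧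
      munariniRel k u' v') := by
  rcases h with ⟨a, b, i, hi0, hik, hue, hve⟩ | ⟨a, b, hue, hve⟩
  · subst hue; subst hve
    cases a with
    | nil =>
      exact Or.inl ⟨b, i, hi0, hik, rfl, rfl, genPell_cons_lt hk hu⟩
    | cons x a' =>
      have hrel' : munariniRel k (a' ++ 0 :: b) (a' ++ i :: b) :=
        Or.inl ⟨a', b, i, hi0, hik, rfl, rfl⟩
      by_cases hx : x < k
      · exact Or.inr (Or.inr (Or.inl ⟨x, _, _, hx, rfl, rfl,
          genPell_cons_lt hx hu, genPell_cons_lt hx hv, hrel'⟩))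
      · have hxk : x = k := by
          have := genPell_bdd hu x (by simp)
          omega
        subst hxk
        obtain ⟨t, ht, hgt⟩ := genPell_kk hu
        obtain ⟨t', ht', hgt'⟩ := genPell_kk hv
        cases a' with
        | nil =>
          simp only [List.append_eq, List.nil_append, List.cons.injEq] at ht
          omega
        | cons y a'' =>
          simp only [List.append_eq, List.cons_append, List.cons.injEq] at ht ht'
          obtain ⟨rfl, rfl⟩ := ht
          obtain ⟨-, rfl⟩ := ht'
          exact Or.inr (Or.inr (Or.inr ⟨a'' ++ 0 :: b, a'' ++ i :: b, by simp, by simp,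
            hgt, hgt', Or.inl ⟨a'', b, i, hi0, hik, rfl, rfl⟩⟩))
  · subst hue; subst hve
    cases a with
    | nil =>
      exact Or.inr (Or.inl ⟨b, rfl, rfl, genPell_cons_lt hk (genPell_cons_lt hk hu)⟩)
    | cons x a' =>
      have hrel' : munariniRel k (a' ++ 0 :: 0 :: b) (a' ++ k :: k :: b) :=
        Or.inr ⟨a', b, rfl, rfl⟩
      by_cases hx : x < k
      · exact Or.inr (Or.inr (Or.inl ⟨x, _, _, hx, rfl, rfl,
          genPell_cons_lt hx hu, genPell_cons_lt hx hv, hrel'⟩))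
      · have hxk : x = k := by
          have := genPell_bdd hu x (by simp)
          omega
        subst hxk
        obtain ⟨t, ht, hgt⟩ := genPell_kk hu
        obtain ⟨t', ht', hgt'⟩ := genPell_kk hv
        cases a' with
        | nil =>
          simp only [List.append_eq, List.nil_append, List.cons.injEq] at ht
          omega
        | cons y a'' =>
          simp only [List.append_eq, List.cons_append, List.cons.injEq] at ht ht'
          obtain ⟨rfl, rfl⟩ := ht
          obtain ⟨-, rfl⟩ := ht'
          refine Or.inr (Or.inr (Or.inr ⟨_, _, by simp, by simp, hgt, hgt',
            Or.inr ⟨a'', b, rfl, rfl⟩⟩))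

end MunariniAux
namespace MunariniAux

lemma oedge_ext {n k : ℕ} {p q : OEdge n k} (h1 : p.val.1.val = q.val.1.val)
    (h2 : p.val.2.val = q.val.2.val) : p = q :=
  Subtype.ext (Prod.ext_iff.mpr ⟨Subtype.ext h1, Subtype.ext h2⟩)

def emap (k m : ℕ) (hk : 1 ≤ k) :
    (Fin k × OEdge (m + 1) k) ⊕ OEdge m k ⊕ (Fin (k - 1) × PellVtx (m + 1) k) ⊕ PellVtx m k →
      OEdge (m + 2) k
  | Sum.inl (j, ⟨(⟨u, hu⟩, ⟨v, hv⟩), hrel⟩) =>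
      ⟨(⟨(j : ℕ) :: u, by simp [hu.1], GenPell.cons _ _ j.isLt hu.2⟩,
        ⟨(j : ℕ) :: v, by simp [hv.1], GenPell.cons _ _ j.isLt hv.2⟩), rel_cons hrel⟩
  | Sum.inr (Sum.inl ⟨(⟨u, hu⟩, ⟨v, hv⟩), hrel⟩) =>
      ⟨(⟨k :: k :: u, by simp [hu.1], GenPell.kk u hu.2⟩,
        ⟨k :: k :: v, by simp [hv.1], GenPell.kk v hv.2⟩), rel_cons (rel_cons hrel)⟩
  | Sum.inr (Sum.inr (Sum.inl (i, ⟨s, hs⟩))) =>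
      ⟨(⟨0 :: s, by simp [hs.1], GenPell.cons _ _ hk hs.2⟩,
        ⟨((i : ℕ) + 1) :: s, by simp [hs.1],
          GenPell.cons _ _ (by have := i.isLt; omega) hs.2⟩),
       Or.inl ⟨[], s, (i : ℕ) + 1, by omega, by have := i.isLt; omega, rfl, rfl⟩⟩
  | Sum.inr (Sum.inr (Sum.inr ⟨s, hs⟩)) =>
      ⟨(⟨0 :: 0 :: s, by simp [hs.1], GenPell.cons _ _ hk (GenPell.cons _ _ hk hs.2)⟩,
        ⟨k :: k :: s, by simp [hs.1], GenPell.kk s hs.2⟩),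
       Or.inr ⟨[], s, rfl, rfl⟩⟩

lemma emap_bij (k m : ℕ) (hk : 1 ≤ k) : Function.Bijective (emap k m hk) := by
  constructor
  · rintro (⟨j, ⟨⟨u, hu⟩, ⟨v, hv⟩⟩, hr⟩ | ⟨⟨⟨u, hu⟩, ⟨v, hv⟩⟩, hr⟩ | ⟨i, s, hs⟩ | ⟨s, hs⟩)
           (⟨j', ⟨⟨u', hu'⟩, ⟨v', hv'⟩⟩, hr'⟩ | ⟨⟨⟨u', hu'⟩, ⟨v', hv'⟩⟩, hr'⟩ | ⟨i', s', hs'⟩ | ⟨s', hs'⟩) h <;>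
      (have h1 := congrArg (fun p => p.val.1.val) h) <;>
      (have h2 := congrArg (fun p => p.val.2.val) h) <;>
      simp only [emap, List.cons.injEq] at h1 h2 <;> clear h
    · obtain ⟨hj, rfl⟩ := h1
      obtain ⟨-, rfl⟩ := h2
      have : j = j' := Fin.val_injective hj
      subst this; rfl
    · exact absurd h1.1 (by have := j.isLt; omega)
    · obtain ⟨e1, -⟩ := h1; obtain ⟨e2, -⟩ := h2; have := i'.isLt; omega
    · obtain ⟨e1, -⟩ := h1; obtain ⟨e2, -⟩ := h2; omega
    · obtain ⟨e, -⟩ := h1; have := j'.isLt; omega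
    · obtain ⟨-, -, rfl⟩ := h1; obtain ⟨-, -, rfl⟩ := h2; rfl
    · obtain ⟨e, -⟩ := h1; omega
    · obtain ⟨e, -⟩ := h1; omega
    · obtain ⟨e1, -⟩ := h1; obtain ⟨e2, -⟩ := h2; have := i.isLt; omega
    · obtain ⟨e, -⟩ := h1; omega
    · obtain ⟨-, rfl⟩ := h1
      obtain ⟨e, -⟩ := h2
      have : i = i' := Fin.val_injective (by omega)
      subst this; rfl
    · obtain ⟨e, -⟩ := h2; have := i.isLt; omega
    · obtain ⟨e1, -⟩ := h1; obtain ⟨e2, -⟩ := h2; omega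
    · obtain ⟨e, -⟩ := h1; omega
    · obtain ⟨e, -⟩ := h2; have := i'.isLt; omega
    · obtain ⟨-, -, rfl⟩ := h1; rfl
  · rintro ⟨⟨⟨u, hul, hug⟩, ⟨v, hvl, hvg⟩⟩, hrel⟩
    rcases rel_cases hk hug hvg hrel with
      ⟨s, i, hi0, hik, hue, hve, hgs⟩ | ⟨s, hue, hve, hgs⟩ |
      ⟨x, u', v', hx, hue, hve, hgu, hgv, hr⟩ | ⟨u', v', hue, hve, hgu, hgv, hr⟩
    · refine ⟨Sum.inr (Sum.inr (Sum.inl (⟨i - 1, by omega⟩,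
        ⟨s, by subst hue; simpa using hul, hgs⟩))), ?_⟩
      apply oedge_ext
      · simp [emap, hue]
      · simp only [emap]
        rw [hve]
        congr 2
        omega
    · refine ⟨Sum.inr (Sum.inr (Sum.inr ⟨s, by subst hue; simpa using hul, hgs⟩)), ?_⟩
      apply oedge_ext
      · simp [emap, hue]
      · simp [emap, hve]
    · refine ⟨Sum.inl (⟨x, hx⟩, ⟨(⟨u', by subst hue; simpa using hul, hgu⟩,
        ⟨v', by subst hve; simpa using hvl, hgv⟩), hr⟩), ?_⟩
      apply oedge_ext
      · simp [emap, hue]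
      · simp [emap, hve]
    · refine ⟨Sum.inr (Sum.inl ⟨(⟨u', by subst hue; simpa using hul, hgu⟩,
        ⟨v', by subst hve; simpa using hvl, hgv⟩), hr⟩), ?_⟩
      apply oedge_ext
      · simp [emap, hue]
      · simp [emap, hve]

end MunariniAux
namespace MunariniAux

lemma ncard_edgeSet (n k : ℕ) (hk : 1 ≤ k) :
    (MunariniGraph n k).edgeSet.ncard = Nat.card (OEdge n k) := by
  rw [← Nat.card_coe_set_eq]
  symm
  have hne : ∀ u v : PellVtx n k, munariniRel k u.val v.val → u ≠ v := by
    intro u v hrel heq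
    have h := rel_count hk hrel
    rw [heq] at h
    omega
  apply Nat.card_eq_of_bijective
    (f := fun p : OEdge n k => (⟨s(p.val.1, p.val.2), by
      rw [SimpleGraph.mem_edgeSet]
      exact ⟨hne _ _ p.2, Or.inl p.2⟩⟩ : (MunariniGraph n k).edgeSet))
  constructor
  · rintro p q h
    have h' : s(p.val.1, p.val.2) = s(q.val.1, q.val.2) := congrArg Subtype.val h
    rcases Sym2.eq_iff.mp h' with ⟨h1, h2⟩ | ⟨h1, h2⟩
    · exact Subtype.ext (Prod.ext_iff.mpr ⟨h1, h2⟩)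
    · exfalso
      have c1 := rel_count hk p.2
      have c2 := rel_count hk q.2
      rw [← h1, ← h2] at c2
      omega
  · rintro ⟨e, he⟩
    induction e with
    | _ u v =>
      rw [SimpleGraph.mem_edgeSet, MunariniGraph, SimpleGraph.fromRel_adj] at he
      rcases he with ⟨hne', hr | hr⟩
      · exact ⟨⟨(u, v), hr⟩, rfl⟩
      · exact ⟨⟨(v, u), hr⟩, Subtype.ext (Sym2.eq_swap)⟩

lemma card_oedge0 (k : ℕ) : Nat.card (OEdge 0 k) = 0 := by
  have : IsEmpty (OEdge 0 k) := by
    constructor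
    rintro ⟨⟨⟨u, hul, hug⟩, ⟨v, hvl, hvg⟩⟩, hrel⟩
    dsimp only at hrel
    cases List.length_eq_zero_iff.mp hul
    rcases hrel with ⟨a, b, i, -, -, he, -⟩ | ⟨a, b, he, -⟩ <;> cases a <;> simp at he
  exact Nat.card_of_isEmpty

lemma card_oedge1 (k : ℕ) (hk : 1 ≤ k) : Nat.card (OEdge 1 k) = k - 1 := by
  have hb : Function.Bijective (fun i : Fin (k - 1) =>
      (⟨(⟨[0], by simp, GenPell.cons _ _ hk GenPell.nil⟩,
        ⟨[(i : ℕ) + 1], by simp, GenPell.cons _ _ (by have := i.isLt; omega) GenPell.nil⟩),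
        Or.inl ⟨[], [], (i : ℕ) + 1, by omega, by have := i.isLt; omega, rfl, rfl⟩⟩ :
          OEdge 1 k)) := by
    constructor
    · intro i i' h
      have h2 := congrArg (fun p => p.val.2.val) h
      simp only [List.cons.injEq] at h2
      exact Fin.val_injective (by omega)
    · rintro ⟨⟨⟨u, hul, hug⟩, ⟨v, hvl, hvg⟩⟩, hrel⟩
      dsimp only at hrel
      rcases hrel with ⟨a, b, i, hi0, hik, hue, hve⟩ | ⟨a, b, hue, hve⟩
      · cases a with
        | nil =>
          have hb0 : b = [] := by
            subst hue
            simpa using List.length_eq_zero_iff.mp (by simpa using hul)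
          subst hb0
          refine ⟨⟨i - 1, by omega⟩, ?_⟩
          apply oedge_ext
          · simpa using hue.symm
          · have hi : i - 1 + 1 = i := by omega
            simp [hve, hi]
        | cons x a' =>
          exfalso
          subst hue
          simp at hul <;> omega
      · exfalso
        subst hue
        simp at hul <;> omega
  rw [← Nat.card_eq_of_bijective _ hb]
  simp [Nat.card_eq_fintype_card]


lemma card_oedge_rec (k : ℕ) (hk : 1 ≤ k) (m : ℕ) :
    Nat.card (OEdge (m + 2) k) =
      k * Nat.card (OEdge (m + 1) k) + Nat.card (OEdge m k) +
        (k - 1) * kFib k (m + 2) + kFib k (m + 1) := by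
  rw [← Nat.card_eq_of_bijective _ (emap_bij k m hk)]
  rw [Nat.card_sum, Nat.card_sum, Nat.card_sum, Nat.card_prod, Nat.card_prod,
    card_pellVtx, card_pellVtx]
  simp [Nat.card_eq_fintype_card]
  ring

end MunariniAux

/-- Recurrence for the number of edges of the Munarini graphs. -/
theorem munarini_edge_recurrence (k : ℕ) (hk : 1 ≤ k) :
    (MunariniGraph 0 k).edgeSet.ncard = 0 ∧
    (MunariniGraph 1 k).edgeSet.ncard = k - 1 ∧
    (∀ n : ℕ, 2 ≤ n →
      (MunariniGraph n k).edgeSet.ncard =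
        k * (MunariniGraph (n - 1) k).edgeSet.ncard +
          (MunariniGraph (n - 2) k).edgeSet.ncard + kFib k (n + 1) - kFib k n) := by
  refine ⟨?_, ?_, ?_⟩
  · rw [MunariniAux.ncard_edgeSet 0 k hk, MunariniAux.card_oedge0]
  · rw [MunariniAux.ncard_edgeSet 1 k hk, MunariniAux.card_oedge1 k hk]
  · intro n hn
    obtain ⟨m, rfl⟩ : ∃ m, n = m + 2 := ⟨n - 2, by omega⟩
    rw [show m + 2 - 1 = m + 1 from rfl, show m + 2 - 2 = m from rfl,
      MunariniAux.ncard_edgeSet _ k hk, MunariniAux.ncard_edgeSet _ k hk,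
      MunariniAux.ncard_edgeSet _ k hk, MunariniAux.card_oedge_rec k hk m]
    have hfib : kFib k (m + 2 + 1) = k * kFib k (m + 2) + kFib k (m + 1) := rfl
    have h1 : kFib k (m + 2) ≤ k * kFib k (m + 2) :=
      Nat.le_mul_of_pos_left _ (by omega)
    rw [hfib, Nat.sub_one_mul]
    generalize k * kFib k (m + 2) = A at h1 ⊢
    generalize k * Nat.card (MunariniAux.OEdge (m + 1) k) = B
    omega
end

section
/- For all positive integers n and k, the number of edges of the Munarini graph M_{n,k} satisfies (k² + 4)·|E(M_{n,k})| = (k² − k + 2)·n·F_{n+1,k} + (k − 2)·(n + 1)·F_{n,k}. -/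
section MunariniProof

variable {k : ℕ}

lemma kFib_rec (k n : ℕ) : kFib k (n + 2) = k * kFib k (n + 1) + kFib k n := rfl

lemma genPell_append {a b : List ℕ} (ha : GenPell k a) (hb : GenPell k b) :
    GenPell k (a ++ b) := by
  induction ha with
  | nil => simpa
  | cons i s hi _ ih => exact GenPell.cons i _ hi ih
  | kk s _ ih => exact GenPell.kk _ ih

lemma genPell_split {w a b : List ℕ} {c : ℕ} (hc : c < k)
    (h : GenPell k w) (hw : w = a ++ c :: b) : GenPell k a ∧ GenPell k b := by
  induction h generalizing a with
  | nil => exact absurd hw.symm (by simp)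
  | cons i s hi hs ih =>
    cases a with
    | nil =>
      simp only [List.nil_append, List.cons.injEq] at hw
      exact ⟨GenPell.nil, hw.2 ▸ hs⟩
    | cons x a' =>
      simp only [List.cons_append, List.cons.injEq] at hw
      obtain ⟨rfl, hw2⟩ := hw
      obtain ⟨h1, h2⟩ := ih hw2
      exact ⟨GenPell.cons i a' hi h1, h2⟩
  | kk s hs ih =>
    cases a with
    | nil =>
      simp only [List.nil_append, List.cons.injEq] at hw
      omega
    | cons x a' =>
      cases a' with
      | nil =>
        simp only [List.cons_append, List.nil_append, List.cons.injEq] at hw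
        omega
      | cons y a'' =>
        simp only [List.cons_append, List.cons.injEq] at hw
        obtain ⟨rfl, rfl, hw2⟩ := hw
        obtain ⟨h1, h2⟩ := ih hw2
        exact ⟨GenPell.kk a'' h1, h2⟩

lemma genPell_cons_inv {i : ℕ} {s : List ℕ} (hik : i < k) (h : GenPell k (i :: s)) :
    GenPell k s := by
  cases h with
  | cons _ _ _ h => exact h
  | kk t ht => exact absurd hik (lt_irrefl k)

lemma genPell_split2 {a b : List ℕ} (hk : 1 ≤ k) (h : GenPell k (a ++ 0 :: 0 :: b)) :
    GenPell k a ∧ GenPell k b := by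
  obtain ⟨h1, h2⟩ := genPell_split hk h rfl
  exact ⟨h1, genPell_cons_inv hk h2⟩

/-- The master uniqueness lemma for single-position replacements. -/
lemma master {α : Type} {a c b d d' : List α} {x x' y y' : α}
    (e1 : a ++ x :: b = c ++ y :: d) (e2 : a ++ x' :: b = c ++ y' :: d') (hxx : x ≠ x') :
    (a = c ∧ x = y ∧ x' = y' ∧ b = d ∧ b = d') ∨
    (∃ e, a = c ++ y :: e ∧ y = y' ∧ d = e ++ x :: b ∧ d' = e ++ x' :: b) := by
  rcases List.append_eq_append_iff.mp e1 with ⟨t, hc, ht⟩ | ⟨t, ha, ht⟩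
  · cases t with
    | nil =>
      simp only [List.append_nil] at hc
      subst hc
      obtain ⟨rfl, rfl⟩ := List.cons.inj ht
      have := List.append_cancel_left e2
      obtain ⟨rfl, rfl⟩ := List.cons.inj this
      exact Or.inl ⟨rfl, rfl, rfl, rfl, rfl⟩
    | cons z e =>
      simp only [List.cons_append, List.cons.injEq] at ht
      obtain ⟨rfl, rfl⟩ := ht
      subst hc
      rw [show (a ++ x :: e) ++ y' :: d' = a ++ (x :: (e ++ y' :: d')) by simp] at e2
      have := List.append_cancel_left e2
      exact absurd (List.cons.inj this).1 (Ne.symm hxx)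
  · cases t with
    | nil =>
      simp only [List.append_nil] at ha
      subst ha
      obtain ⟨rfl, rfl⟩ := List.cons.inj ht
      have := List.append_cancel_left e2
      obtain ⟨rfl, rfl⟩ := List.cons.inj this
      exact Or.inl ⟨rfl, rfl, rfl, rfl, rfl⟩
    | cons z e =>
      simp only [List.cons_append, List.cons.injEq] at ht
      obtain ⟨rfl, rfl⟩ := ht
      subst ha
      rw [show (c ++ y :: e) ++ x' :: b = c ++ (y :: (e ++ x' :: b)) by simp] at e2
      have := List.append_cancel_left e2
      obtain ⟨rfl, h2⟩ := List.cons.inj this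
      exact Or.inr ⟨e, rfl, rfl, rfl, h2.symm⟩

lemma t2same {α : Type} {a c b d : List α} {x y : α} (hxy : x ≠ y)
    (e1 : a ++ x :: x :: b = c ++ x :: x :: d) (e2 : a ++ y :: y :: b = c ++ y :: y :: d) :
    a = c ∧ b = d := by
  rcases List.append_eq_append_iff.mp e1 with ⟨t, hc, ht⟩ | ⟨t, ha, ht⟩
  · cases t with
    | nil =>
      simp only [List.append_nil] at hc
      subst hc
      simp only [List.nil_append, List.cons.injEq] at ht
      exact ⟨rfl, ht.2.2⟩
    | cons z e =>
      simp only [List.cons_append, List.cons.injEq] at ht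
      obtain ⟨rfl, _⟩ := ht
      subst hc
      rw [show (a ++ x :: e) ++ y :: y :: d = a ++ (x :: (e ++ y :: y :: d)) by simp] at e2
      have := List.append_cancel_left e2
      exact absurd (List.cons.inj this).1 (Ne.symm hxy)
  · cases t with
    | nil =>
      simp only [List.append_nil] at ha
      subst ha
      simp only [List.nil_append, List.cons.injEq] at ht
      exact ⟨rfl, ht.2.2.symm⟩
    | cons z e =>
      simp only [List.cons_append, List.cons.injEq] at ht
      obtain ⟨rfl, _⟩ := ht
      subst ha
      rw [show (c ++ x :: e) ++ y :: y :: b = c ++ (x :: (e ++ y :: y :: b)) by simp] at e2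
      have := List.append_cancel_left e2
      exact absurd (List.cons.inj this).1 hxy

lemma t2cross {α : Type} {a c b d : List α} {x y : α} (hxy : x ≠ y)
    (e1 : a ++ x :: x :: b = c ++ y :: y :: d) (e2 : a ++ y :: y :: b = c ++ x :: x :: d) :
    False := by
  rcases List.append_eq_append_iff.mp e1 with ⟨t, hc, ht⟩ | ⟨t, ha, ht⟩
  · cases t with
    | nil =>
      simp only [List.append_nil] at hc
      subst hc
      exact hxy (List.cons.inj ht).1
    | cons z e =>
      simp only [List.cons_append, List.cons.injEq] at ht
      obtain ⟨rfl, _⟩ := ht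
      subst hc
      rw [show (a ++ x :: e) ++ x :: x :: d = a ++ (x :: (e ++ x :: x :: d)) by simp] at e2
      have := List.append_cancel_left e2
      exact hxy (List.cons.inj this).1.symm
  · cases t with
    | nil =>
      simp only [List.append_nil] at ha
      subst ha
      exact hxy (List.cons.inj ht).1.symm
    | cons z e =>
      simp only [List.cons_append, List.cons.injEq] at ht
      obtain ⟨rfl, _⟩ := ht
      subst ha
      rw [show (c ++ y :: e) ++ y :: y :: b = c ++ (y :: (e ++ y :: y :: b)) by simp] at e2
      have := List.append_cancel_left e2
      exact hxy (List.cons.inj this).1.symm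

lemma append_cons_ne {α : Type} {a b : List α} {x y : α} (h : x ≠ y) :
    a ++ x :: b ≠ a ++ y :: b := fun he => h (List.cons.inj (List.append_cancel_left he)).1

/-- Raw edge map: code `(i,a,b)` with `i = k` encodes the `00 ↔ kk` edge, otherwise the
`0 ↔ i` edge. -/
def phiE (k : ℕ) (c : ℕ × List ℕ × List ℕ) : Sym2 (List ℕ) :=
  if c.1 = k then s(c.2.1 ++ 0 :: 0 :: c.2.2, c.2.1 ++ k :: k :: c.2.2)
  else s(c.2.1 ++ 0 :: c.2.2, c.2.1 ++ c.1 :: c.2.2)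

def goodCode (n k : ℕ) (c : ℕ × List ℕ × List ℕ) : Prop :=
  GenPell k c.2.1 ∧ GenPell k c.2.2 ∧
    ((0 < c.1 ∧ c.1 < k ∧ c.2.1.length + c.2.2.length + 1 = n) ∨
     (c.1 = k ∧ c.2.1.length + c.2.2.length + 2 = n))

lemma phi_injOn (n k : ℕ) (hk : 1 ≤ k) : Set.InjOn (phiE k) {c | goodCode n k c} := by
  rintro ⟨i, a, b⟩ hc ⟨i', a', b'⟩ hc' he
  obtain ⟨_, _, h1 | h1⟩ := hc <;> obtain ⟨_, _, h2 | h2⟩ := hc'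
  · -- type1 / type1
    rw [phiE, phiE, if_neg (by omega : ¬ i = k), if_neg (by omega : ¬ i' = k)] at he
    rcases Sym2.eq_iff.mp he with ⟨e1, e2⟩ | ⟨e1, e2⟩
    · rcases master e1 e2 (by omega : (0:ℕ) ≠ i) with ⟨rfl, _, rfl, rfl, _⟩ | ⟨e, _, _, hd, hd'⟩
      · rfl
      · exact absurd (List.cons.inj (List.append_cancel_left (hd.symm.trans hd'))).1 (by omega)
    · rcases master e1 e2 (by omega : (0:ℕ) ≠ i) with ⟨_, h, _, _, _⟩ | ⟨e, _, h, _, _⟩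
      · omega
      · omega
  · -- type1 / type2
    rw [phiE, phiE, if_neg (by omega : ¬ i = k), if_pos h2.1] at he
    rcases Sym2.eq_iff.mp he with ⟨e1, e2⟩ | ⟨e1, e2⟩
    · rcases master e1 e2 (by omega : (0:ℕ) ≠ i) with ⟨_, _, h, _, _⟩ | ⟨e, _, h, _, _⟩
      · omega
      · omega
    · rcases master e1 e2 (by omega : (0:ℕ) ≠ i) with ⟨_, h, _, _, _⟩ | ⟨e, _, h, _, _⟩
      · omega
      · omega
  · -- type2 / type1
    rw [phiE, phiE, if_pos h1.1, if_neg (by omega : ¬ i' = k)] at he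
    rcases Sym2.eq_iff.mp he with ⟨e1, e2⟩ | ⟨e1, e2⟩
    · rcases master e1.symm e2.symm (by omega : (0:ℕ) ≠ i') with ⟨_, _, h, _, _⟩ | ⟨e, _, h, _, _⟩
      · omega
      · omega
    · rcases master e2.symm e1.symm (by omega : (0:ℕ) ≠ i') with ⟨_, h, _, _, _⟩ | ⟨e, _, h, _, _⟩
      · omega
      · omega
  · -- type2 / type2
    rw [phiE, phiE, if_pos h1.1, if_pos h2.1] at he
    rcases Sym2.eq_iff.mp he with ⟨e1, e2⟩ | ⟨e1, e2⟩
    · obtain ⟨rfl, rfl⟩ := t2same (by omega : (0:ℕ) ≠ k) e1 e2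
      exact Prod.ext (h1.1.trans h2.1.symm) rfl
    · exact (t2cross (by omega : (0:ℕ) ≠ k) e1 e2).elim

lemma rel_code {n k : ℕ} (hk : 1 ≤ k) (u v : PellVtx n k) (h : munariniRel k u.val v.val) :
    ∃ c, goodCode n k c ∧ phiE k c = s(u.val, v.val) := by
  rcases h with ⟨a, b, i, hi0, hik, hu, hv⟩ | ⟨a, b, hu, hv⟩
  · obtain ⟨ha, hb⟩ := genPell_split hk u.2.2 hu
    refine ⟨(i, a, b), ⟨ha, hb, Or.inl ⟨hi0, hik, ?_⟩⟩, ?_⟩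
    · show a.length + b.length + 1 = n
      have hL := u.2.1
      rw [hu] at hL
      simp only [List.length_append, List.length_cons] at hL
      omega
    · rw [phiE, if_neg (by omega : ¬ i = k), hu, hv]
  · obtain ⟨ha, hb⟩ := genPell_split2 hk (hu ▸ u.2.2)
    refine ⟨(k, a, b), ⟨ha, hb, Or.inr ⟨rfl, ?_⟩⟩, ?_⟩
    · show a.length + b.length + 2 = n
      have hL := u.2.1
      rw [hu] at hL
      simp only [List.length_append, List.length_cons] at hL
      omega
    · rw [phiE, if_pos rfl, hu, hv]

lemma image_eq (n k : ℕ) (hk : 1 ≤ k) :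
    Sym2.map (Subtype.val) '' (MunariniGraph n k).edgeSet = phiE k '' {c | goodCode n k c} := by
  ext e
  constructor
  · rintro ⟨e', he', rfl⟩
    induction e' using Sym2.ind with
    | _ u v =>
      rw [SimpleGraph.mem_edgeSet] at he'
      simp only [MunariniGraph, SimpleGraph.fromRel_adj] at he'
      obtain ⟨hne, h | h⟩ := he'
      · obtain ⟨c, hc, hphi⟩ := rel_code hk u v h
        exact ⟨c, hc, by rw [hphi, Sym2.map_pair_eq]⟩
      · obtain ⟨c, hc, hphi⟩ := rel_code hk v u h
        exact ⟨c, hc, by rw [hphi, Sym2.map_pair_eq, Sym2.eq_swap]⟩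
  · rintro ⟨⟨i, a, b⟩, ⟨ha, hb, hcase⟩, rfl⟩
    rcases hcase with ⟨hi0, hik, hlen⟩ | ⟨hik, hlen⟩ <;>
      replace hlen : a.length + b.length + _ = n := hlen
    · refine ⟨s(⟨a ++ 0 :: b, by simp only [List.length_append, List.length_cons]; omega,
            genPell_append ha (GenPell.cons 0 b hk hb)⟩,
          ⟨a ++ i :: b, by simp only [List.length_append, List.length_cons]; omega,
            genPell_append ha (GenPell.cons i b hik hb)⟩), ?_, ?_⟩
      · rw [SimpleGraph.mem_edgeSet]
        simp only [MunariniGraph, SimpleGraph.fromRel_adj]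
        refine ⟨?_, Or.inl (Or.inl ⟨a, b, i, hi0, hik, rfl, rfl⟩)⟩
        intro hco
        exact append_cons_ne (show (0:ℕ) ≠ i by omega) (congrArg Subtype.val hco)
      · rw [Sym2.map_pair_eq, phiE, if_neg (by omega : ¬ i = k)]
    · refine ⟨s(⟨a ++ 0 :: 0 :: b, by simp only [List.length_append, List.length_cons]; omega,
            genPell_append ha (GenPell.cons 0 _ hk (GenPell.cons 0 b hk hb))⟩,
          ⟨a ++ k :: k :: b, by simp only [List.length_append, List.length_cons]; omega,
            genPell_append ha (GenPell.kk b hb)⟩), ?_, ?_⟩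
      · rw [SimpleGraph.mem_edgeSet]
        simp only [MunariniGraph, SimpleGraph.fromRel_adj]
        refine ⟨?_, Or.inl (Or.inr ⟨a, b, rfl, rfl⟩)⟩
        intro hco
        exact absurd (List.cons.inj (List.append_cancel_left (congrArg Subtype.val hco))).1
          (by omega)
      · rw [Sym2.map_pair_eq, phiE, if_pos hik]

lemma edge_ncard_eq_good (n k : ℕ) (hk : 1 ≤ k) :
    (MunariniGraph n k).edgeSet.ncard = {c | goodCode n k c}.ncard := by
  rw [← Set.ncard_image_of_injOn (phi_injOn n k hk), ← image_eq n k hk,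
    Set.ncard_image_of_injOn ((Sym2.map.injective Subtype.val_injective).injOn)]

def pellFinset (k : ℕ) : ℕ → Finset (List ℕ)
  | 0 => {[]}
  | 1 => (Finset.range k).image (fun i => [i])
  | (m+2) => ((Finset.range k) ×ˢ pellFinset k (m+1)).image (fun p => p.1 :: p.2) ∪
      (pellFinset k m).image (fun s => k :: k :: s)

lemma mem_pellFinset (k : ℕ) : ∀ m s, s ∈ pellFinset k m ↔ s.length = m ∧ GenPell k s
  | 0, s => by
    simp only [pellFinset, Finset.mem_singleton]
    constructor
    · rintro rfl
      exact ⟨rfl, GenPell.nil⟩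
    · rintro ⟨h, _⟩
      exact List.length_eq_zero_iff.mp h
  | 1, s => by
    simp only [pellFinset, Finset.mem_image, Finset.mem_range]
    constructor
    · rintro ⟨i, hi, rfl⟩
      exact ⟨rfl, GenPell.cons i [] hi GenPell.nil⟩
    · rintro ⟨h, hp⟩
      obtain ⟨x, rfl⟩ := List.length_eq_one_iff.mp h
      cases hp with
      | cons _ _ hi _ => exact ⟨x, hi, rfl⟩
  | (m+2), s => by
    simp only [pellFinset, Finset.mem_union, Finset.mem_image, Finset.mem_product,
      Finset.mem_range, Prod.exists]
    constructor
    · rintro (⟨i, t, ⟨hi, ht⟩, rfl⟩ | ⟨t, ht, rfl⟩)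
      · obtain ⟨hl, hp⟩ := (mem_pellFinset k (m+1) t).mp ht
        exact ⟨by simp [hl], GenPell.cons i t hi hp⟩
      · obtain ⟨hl, hp⟩ := (mem_pellFinset k m t).mp ht
        exact ⟨by simp [hl], GenPell.kk t hp⟩
    · rintro ⟨hl, hp⟩
      cases hp with
      | nil => simp at hl
      | cons i t hi hp =>
        refine Or.inl ⟨i, t, ⟨hi, (mem_pellFinset k (m+1) t).mpr ⟨?_, hp⟩⟩, rfl⟩
        simp only [List.length_cons] at hl
        omega
      | kk t hp =>
        refine Or.inr ⟨t, (mem_pellFinset k m t).mpr ⟨?_, hp⟩, rfl⟩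
        simp only [List.length_cons] at hl
        omega

lemma card_pellFinset (k : ℕ) : ∀ m, (pellFinset k m).card = kFib k (m + 1)
  | 0 => rfl
  | 1 => by
    rw [pellFinset, Finset.card_image_of_injective _ (fun x y h => by simpa using h)]
    simp [kFib]
  | (m+2) => by
    have hdisj : Disjoint
        (((Finset.range k) ×ˢ pellFinset k (m+1)).image (fun p => p.1 :: p.2))
        ((pellFinset k m).image (fun s => k :: k :: s)) := by
      rw [Finset.disjoint_left]
      rintro x hx hy
      simp only [Finset.mem_image, Finset.mem_product, Finset.mem_range, Prod.exists] at hx hy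
      obtain ⟨i, t, ⟨hi, _⟩, rfl⟩ := hx
      obtain ⟨t', _, h⟩ := hy
      obtain ⟨h1, -⟩ := List.cons.inj h.symm
      omega
    rw [pellFinset, Finset.card_union_of_disjoint hdisj, Finset.card_image_of_injective _
        (fun x y h => by
          cases x; cases y; simpa [Prod.ext_iff] using h),
      Finset.card_image_of_injective _ (fun x y h => by simpa using h),
      Finset.card_product, Finset.card_range, card_pellFinset k (m+1), card_pellFinset k m]
    exact (kFib_rec k (m+1)).symm

def pairFinset (k m : ℕ) : Finset (List ℕ × List ℕ) :=
  (Finset.range (m+1)).biUnion fun j => pellFinset k j ×ˢ pellFinset k (m - j)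

lemma mem_pairFinset {k m : ℕ} {p : List ℕ × List ℕ} :
    p ∈ pairFinset k m ↔ GenPell k p.1 ∧ GenPell k p.2 ∧ p.1.length + p.2.length = m := by
  simp only [pairFinset, Finset.mem_biUnion, Finset.mem_range, Finset.mem_product,
    mem_pellFinset]
  constructor
  · rintro ⟨j, hj, ⟨h1, g1⟩, h2, g2⟩
    exact ⟨g1, g2, by omega⟩
  · rintro ⟨g1, g2, h⟩
    exact ⟨p.1.length, by omega, ⟨rfl, g1⟩, by omega, g2⟩

def Ssum (k m : ℕ) : ℕ := ∑ j ∈ Finset.range (m+1), kFib k (j+1) * kFib k (m - j + 1)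

lemma card_pairFinset (k m : ℕ) : (pairFinset k m).card = Ssum k m := by
  rw [pairFinset, Finset.card_biUnion, Ssum]
  · exact Finset.sum_congr rfl fun j _ => by
      rw [Finset.card_product, card_pellFinset, card_pellFinset]
  · intro x hx y hy hxy
    rw [Function.onFun, Finset.disjoint_left]
    intro p hp hp'
    rw [Finset.mem_product, mem_pellFinset, mem_pellFinset] at hp hp'
    exact hxy (hp.1.1.symm.trans hp'.1.1)

def codesFinset (n k : ℕ) : Finset (ℕ × List ℕ × List ℕ) :=
  (Finset.Ioo 0 k) ×ˢ pairFinset k (n-1) ∪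
    (if 2 ≤ n then ({k} : Finset ℕ) ×ˢ pairFinset k (n-2) else ∅)

lemma good_eq_codes (n k : ℕ) (hn : 1 ≤ n) (hk : 1 ≤ k) :
    {c | goodCode n k c} = ↑(codesFinset n k) := by
  ext ⟨i, a, b⟩
  rw [Set.mem_setOf_eq, Finset.mem_coe, codesFinset, Finset.mem_union]
  by_cases h2n : 2 ≤ n
  · rw [if_pos h2n]
    simp only [Finset.mem_product, Finset.mem_Ioo, Finset.mem_singleton, mem_pairFinset,
      goodCode]
    constructor
    · rintro ⟨ha, hb, ⟨h1, h2, h3⟩ | ⟨h1, h3⟩⟩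
      · exact Or.inl ⟨⟨h1, h2⟩, ha, hb, by omega⟩
      · exact Or.inr ⟨h1, ha, hb, by omega⟩
    · rintro (⟨⟨h1, h2⟩, ha, hb, h3⟩ | ⟨h1, ha, hb, h3⟩)
      · exact ⟨ha, hb, Or.inl ⟨h1, h2, by omega⟩⟩
      · exact ⟨ha, hb, Or.inr ⟨h1, by omega⟩⟩
  · rw [if_neg h2n]
    simp only [Finset.mem_product, Finset.mem_Ioo, Finset.notMem_empty, or_false,
      mem_pairFinset, goodCode]
    constructor
    · rintro ⟨ha, hb, ⟨h1, h2, h3⟩ | ⟨h1, h3⟩⟩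
      · exact ⟨⟨h1, h2⟩, ha, hb, by omega⟩
      · exact absurd h3 (by omega)
    · rintro ⟨⟨h1, h2⟩, ha, hb, h3⟩
      exact ⟨ha, hb, Or.inl ⟨h1, h2, by omega⟩⟩

lemma card_codesFinset (n k : ℕ) :
    (codesFinset n k).card = (k - 1) * Ssum k (n-1) + (if 2 ≤ n then Ssum k (n-2) else 0) := by
  rw [codesFinset, Finset.card_union_of_disjoint]
  · congr 1
    · rw [Finset.card_product, Nat.card_Ioo, card_pairFinset, Nat.sub_zero]
    · split
      · rw [Finset.card_product, Finset.card_singleton, card_pairFinset, one_mul]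
      · simp
  · rw [Finset.disjoint_left]
    rintro ⟨i, p⟩ hx hy
    rw [Finset.mem_product, Finset.mem_Ioo] at hx
    split at hy
    · rw [Finset.mem_product, Finset.mem_singleton] at hy
      omega
    · simp at hy

lemma Ssum_rec (k m : ℕ) : Ssum k (m+2) = k * Ssum k (m+1) + Ssum k m + kFib k (m+3) := by
  have f1 : kFib k 1 = 1 := rfl
  have hS1 : Ssum k (m+1) = (∑ j ∈ Finset.range (m+1), kFib k (j+1) * kFib k (m - j + 2)) +
      kFib k (m+2) := by
    rw [Ssum, Finset.sum_range_succ]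
    congr 1
    · refine Finset.sum_congr rfl fun j hj => ?_
      rw [Finset.mem_range] at hj
      congr 2
      omega
    · rw [show m+1-(m+1)+1 = 1 by omega, f1, mul_one]
  have e3 : ∀ j ∈ Finset.range (m+1), kFib k (j+1) * kFib k (m+2-j+1) =
      k * (kFib k (j+1) * kFib k (m-j+2)) + kFib k (j+1) * kFib k (m-j+1) := by
    intro j hj
    rw [Finset.mem_range] at hj
    rw [show m+2-j+1 = (m-j+1)+2 by omega, kFib_rec, show m-j+1+1 = m-j+2 from rfl]
    ring
  have hfold : (∑ j ∈ Finset.range (m+1), kFib k (j+1) * kFib k (m-j+1)) = Ssum k m := rfl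
  rw [Ssum, Finset.sum_range_succ, Finset.sum_range_succ,
    show m+2-(m+1)+1 = 2 by omega, show m+2-(m+2)+1 = 1 by omega,
    Finset.sum_congr rfl e3, Finset.sum_add_distrib, ← Finset.mul_sum, hfold, hS1, f1,
    show kFib k 2 = k from by
      show k * kFib k 1 + kFib k 0 = k
      rw [show kFib k 1 = 1 from rfl, show kFib k 0 = 0 from rfl]
      omega]
  ring

lemma Ssum_closed (k : ℕ) : ∀ m : ℕ,
    (((k:ℤ)^2+4) * (Ssum k m : ℤ) =
      (k:ℤ)*((m:ℤ)+1)*(kFib k (m+2) : ℤ) + 2*((m:ℤ)+2)*(kFib k (m+1) : ℤ)) ∧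
    (((k:ℤ)^2+4) * (Ssum k (m+1) : ℤ) =
      (k:ℤ)*((m:ℤ)+2)*(kFib k (m+3) : ℤ) + 2*((m:ℤ)+3)*(kFib k (m+2) : ℤ)) := by
  have f1 : kFib k 1 = 1 := rfl
  have f2 : kFib k 2 = k := by
    show k * kFib k 1 + kFib k 0 = k
    rw [show kFib k 1 = 1 from rfl, show kFib k 0 = 0 from rfl]
    omega
  intro m
  induction m with
  | zero =>
    have f3 : kFib k 3 = k*k+1 := by
      have h : kFib k 3 = k * kFib k 2 + kFib k 1 := kFib_rec k 1
      rw [f2, f1] at h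
      omega
    have hs0 : Ssum k 0 = 1 := by simp [Ssum, f1]
    have hs1 : Ssum k 1 = 2*k := by
      rw [Ssum, Finset.sum_range_succ, Finset.sum_range_one]
      norm_num [f1, f2]
      omega
    constructor
    · rw [hs0, f2, f1]
      push_cast
      ring
    · rw [hs1, f3, f2]
      push_cast
      ring
  | succ m ih =>
    refine ⟨ih.2, ?_⟩
    have h0 := ih.1
    have h1 := ih.2
    have hrec : ((Ssum k (m+2) : ℤ)) = (k:ℤ) * (Ssum k (m+1) : ℤ) + (Ssum k m : ℤ) +
        (kFib k (m+3) : ℤ) := by exact_mod_cast congrArg (Nat.cast : ℕ → ℤ) (Ssum_rec k m)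
    have f3 : ((kFib k (m+3)):ℤ) = (k:ℤ) * (kFib k (m+2) : ℤ) + (kFib k (m+1) : ℤ) := by
      exact_mod_cast congrArg (Nat.cast : ℕ → ℤ) (kFib_rec k (m+1))
    have f4 : ((kFib k (m+4)):ℤ) = (k:ℤ) * (kFib k (m+3) : ℤ) + (kFib k (m+2) : ℤ) := by
      exact_mod_cast congrArg (Nat.cast : ℕ → ℤ) (kFib_rec k (m+2))
    show ((k:ℤ)^2+4) * (Ssum k (m+2) : ℤ) =
      (k:ℤ)*((m:ℤ)+3)*(kFib k (m+4) : ℤ) + 2*((m:ℤ)+4)*(kFib k (m+3) : ℤ)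
    push_cast at h0 h1 ⊢
    linear_combination ((k:ℤ)^2+4)*hrec + (k:ℤ)*h1 + h0 - (2*(m:ℤ)+4)*f3
      - (k:ℤ)*((m:ℤ)+3)*f4

lemma edge_count (n k : ℕ) (hn : 1 ≤ n) (hk : 1 ≤ k) :
    (MunariniGraph n k).edgeSet.ncard =
      (k - 1) * Ssum k (n-1) + (if 2 ≤ n then Ssum k (n-2) else 0) := by
  rw [edge_ncard_eq_good n k hk, good_eq_codes n k hn hk, Set.ncard_coe_finset,
    card_codesFinset]

end MunariniProof


/-- `(k² + 4)·|E(M_{n,k})| = (k² − k + 2)·n·F_{n+1,k} + (k − 2)·(n + 1)·F_{n,k}`. -/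
theorem munarini_size_formula (n k : ℕ) (hn : 1 ≤ n) (hk : 1 ≤ k) :
    ((k : ℤ) ^ 2 + 4) * ((MunariniGraph n k).edgeSet.ncard : ℤ) =
      ((k : ℤ) ^ 2 - (k : ℤ) + 2) * (n : ℤ) * (kFib k (n + 1) : ℤ) +
        ((k : ℤ) - 2) * ((n : ℤ) + 1) * (kFib k n : ℤ) := by
  have f1 : kFib k 1 = 1 := rfl
  have f2 : kFib k 2 = k := by
    show k * kFib k 1 + kFib k 0 = k
    rw [show kFib k 1 = 1 from rfl, show kFib k 0 = 0 from rfl]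
    omega
  obtain _ | n := n
  · omega
  obtain _ | m := n
  · -- n = 1
    simp only [Nat.zero_add]
    rw [edge_count 1 k le_rfl hk, if_neg (by omega), show (1:ℕ)-1 = 0 from rfl]
    have hs0 : Ssum k 0 = 1 := by simp [Ssum, f1]
    rw [hs0, mul_one, add_zero, show (1:ℕ)+1 = 2 from rfl, f2, f1]
    push_cast [Nat.cast_sub hk]
    ring
  · -- n = m + 2
    rw [show m+1+1 = m+2 from rfl, show m+2+1 = m+3 from rfl]
    rw [edge_count (m+2) k (by omega) hk, if_pos (by omega),
      show m+2-1 = m+1 from rfl, show m+2-2 = m from rfl]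
    have h0 := (Ssum_closed k m).1
    have h1 := (Ssum_closed k m).2
    have f3 : ((kFib k (m+3)):ℤ) = (k:ℤ) * (kFib k (m+2):ℤ) + (kFib k (m+1):ℤ) := by
      exact_mod_cast congrArg (Nat.cast : ℕ → ℤ) (kFib_rec k (m+1))
    rw [Nat.cast_add, Nat.cast_mul, Nat.cast_sub hk]
    push_cast at h0 h1 ⊢
    linear_combination ((k:ℤ)-1)*h1 + h0 - (2*(m:ℤ)+4)*f3
end

section
/- For every n ≥ 1, twice the number of edges of the Munarini graph M_{n,2} equals n times its number of vertices: 2·|E(M_{n,2})| = n·F_{n+1,2}. -/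
namespace MunAux

theorem inj0 : Function.Injective (fun s : List ℕ => 0 :: s) := fun _ _ h => by simpa using h
theorem inj1 : Function.Injective (fun s : List ℕ => 1 :: s) := fun _ _ h => by simpa using h
theorem inj22 : Function.Injective (fun s : List ℕ => 2 :: 2 :: s) := fun _ _ h => by simpa using h

def P : ℕ → Finset (List ℕ)
  | 0 => {[]}
  | 1 => {[0], [1]}
  | n + 2 =>
      ((P (n+1)).map ⟨fun s => 0 :: s, inj0⟩) ∪
      ((P (n+1)).map ⟨fun s => 1 :: s, inj1⟩) ∪
      ((P n).map ⟨fun s => 2 :: 2 :: s, inj22⟩)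

lemma mem_P_of : ∀ {s : List ℕ}, GenPell 2 s → s ∈ P s.length := by
  intro s h
  induction h with
  | nil => simp [P]
  | cons i s hi hs ih =>
      match s, hs, ih with
      | [], _, _ =>
          interval_cases i <;> simp [P]
      | a :: t, hs, ih =>
          show i :: a :: t ∈ P (t.length + 2)
          rw [P]
          interval_cases i
          · exact Finset.mem_union_left _ (Finset.mem_union_left _ (by
              simpa using ih))
          · exact Finset.mem_union_left _ (Finset.mem_union_right _ (by
              simpa using ih))
  | kk s hs ih =>
      show 2 :: 2 :: s ∈ P (s.length + 2)
      rw [P]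
      exact Finset.mem_union_right _ (by simpa using ih)

lemma of_mem_P : ∀ (n : ℕ) {s : List ℕ}, s ∈ P n → s.length = n ∧ GenPell 2 s := by
  intro n
  induction n using Nat.strong_induction_on with
  | _ n ih =>
    match n with
    | 0 => intro s hs; simp [P] at hs; subst hs; exact ⟨rfl, GenPell.nil⟩
    | 1 =>
        intro s hs
        simp [P] at hs
        rcases hs with rfl | rfl
        · exact ⟨rfl, GenPell.cons 0 [] (by norm_num) GenPell.nil⟩
        · exact ⟨rfl, GenPell.cons 1 [] (by norm_num) GenPell.nil⟩
    | n + 2 =>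
        intro s hs
        rw [P] at hs
        simp only [Finset.mem_union, Finset.mem_map, Function.Embedding.coeFn_mk] at hs
        rcases hs with (⟨t, ht, rfl⟩ | ⟨t, ht, rfl⟩) | ⟨t, ht, rfl⟩
        · obtain ⟨hl, hg⟩ := ih (n+1) (by omega) ht
          exact ⟨by simp [hl], GenPell.cons 0 t (by norm_num) hg⟩
        · obtain ⟨hl, hg⟩ := ih (n+1) (by omega) ht
          exact ⟨by simp [hl], GenPell.cons 1 t (by norm_num) hg⟩
        · obtain ⟨hl, hg⟩ := ih n (by omega) ht
          exact ⟨by simp [hl], GenPell.kk t hg⟩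

lemma mem_P (n : ℕ) (s : List ℕ) : s ∈ P n ↔ s.length = n ∧ GenPell 2 s := by
  constructor
  · exact of_mem_P n
  · rintro ⟨rfl, h⟩; exact mem_P_of h

lemma disj_01 (A B : Finset (List ℕ)) :
    Disjoint ((A.map ⟨fun s => 0 :: s, inj0⟩))
      ((B.map ⟨fun s => 1 :: s, inj1⟩)) := by
  simp only [Finset.disjoint_left, Finset.mem_map, Function.Embedding.coeFn_mk]
  rintro x ⟨t, _, rfl⟩ ⟨u, _, h⟩
  simp at h

lemma disj_012 (A B C : Finset (List ℕ)) :
    Disjoint ((A.map ⟨fun s => 0 :: s, inj0⟩) ∪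
      (B.map ⟨fun s => 1 :: s, inj1⟩))
      ((C.map ⟨fun s => 2 :: 2 :: s, inj22⟩)) := by
  simp only [Finset.disjoint_left, Finset.mem_union, Finset.mem_map,
    Function.Embedding.coeFn_mk]
  rintro x (⟨t, _, rfl⟩ | ⟨t, _, rfl⟩) ⟨u, _, h⟩ <;> simp at h

lemma card_P : ∀ n, (P n).card = kFib 2 (n + 1) := by
  have key : ∀ n, (P n).card = kFib 2 (n + 1) ∧ (P (n+1)).card = kFib 2 (n + 2) := by
    intro n
    induction n with
    | zero => constructor <;> simp [P, kFib]
    | succ n ih =>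
        refine ⟨ih.2, ?_⟩
        have e : kFib 2 (n + 1 + 2) = 2 * kFib 2 (n + 2) + kFib 2 (n + 1) := rfl
        rw [P, Finset.card_union_of_disjoint (disj_012 _ _ _),
          Finset.card_union_of_disjoint (disj_01 _ _)]
        simp only [Finset.card_map]
        rw [ih.1, ih.2]
        show kFib 2 (n+2) + kFib 2 (n+2) + kFib 2 (n+1) = kFib 2 (n+1+2)
        rw [e]; ring
  exact fun n => (key n).1

def occ00 : List ℕ → ℕ
  | x :: y :: s => (if x = 0 ∧ y = 0 then 1 else 0) + occ00 (y :: s)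
  | _ => 0

lemma occ00_cons (x : ℕ) (s : List ℕ) :
    occ00 (x :: s) = (if x = 0 ∧ s[0]? = some 0 then 1 else 0) + occ00 s := by
  cases s with
  | nil => simp [occ00]
  | cons y t => simp [occ00]

noncomputable def SA (n : ℕ) : ℕ := ∑ w ∈ P n, w.count 0
noncomputable def SB (n : ℕ) : ℕ := ∑ w ∈ P n, occ00 w
noncomputable def SH (n : ℕ) : ℕ := ∑ w ∈ P n, (if w[0]? = some 0 then 1 else 0)

lemma SH_eq : ∀ n, SH n = kFib 2 n := by
  intro n
  match n with
  | 0 => simp [SH, P, kFib, Finset.filter_singleton]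
  | 1 => simp [SH, P, kFib, Finset.filter_insert, Finset.filter_singleton]
  | n + 2 =>
      rw [SH, P, Finset.sum_union (disj_012 _ _ _), Finset.sum_union (disj_01 _ _)]
      simp only [Finset.sum_map, Function.Embedding.coeFn_mk]
      simp only [List.getElem?_cons_zero]
      norm_num
      exact card_P (n+1)

lemma SA_rec (n : ℕ) : SA (n + 2) = 2 * SA (n + 1) + SA n + kFib 2 (n + 2) := by
  rw [SA, P, Finset.sum_union (disj_012 _ _ _), Finset.sum_union (disj_01 _ _)]
  simp only [Finset.sum_map, Function.Embedding.coeFn_mk]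
  simp only [List.count_cons]
  norm_num
  rw [Finset.sum_add_distrib]
  simp only [Finset.sum_const, smul_eq_mul, mul_one]
  rw [card_P (n+1)]
  show (∑ w ∈ P (n+1), w.count 0) + kFib 2 (n+2) + (∑ w ∈ P (n+1), w.count 0)
      + (∑ w ∈ P n, w.count 0) = 2 * SA (n+1) + SA n + kFib 2 (n+2)
  rw [SA, SA]; ring

lemma SB_rec (n : ℕ) : SB (n + 2) = 2 * SB (n + 1) + SB n + kFib 2 (n + 1) := by
  rw [SB, P, Finset.sum_union (disj_012 _ _ _), Finset.sum_union (disj_01 _ _)]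
  simp only [Finset.sum_map, Function.Embedding.coeFn_mk]
  simp only [occ00_cons]
  norm_num
  rw [Finset.sum_add_distrib]
  rw [← SH_eq (n+1)]
  show (SH (n+1) + ∑ w ∈ P (n+1), occ00 w) + (∑ w ∈ P (n+1), occ00 w)
      + (∑ w ∈ P n, occ00 w) = 2 * SB (n+1) + SB n + SH (n+1)
  rw [SB, SB]; ring

lemma key_identity : ∀ n, 2 * (SA n + SB n) = n * kFib 2 (n + 1) := by
  have key : ∀ n, 2 * (SA n + SB n) = n * kFib 2 (n + 1) ∧
      2 * (SA (n+1) + SB (n+1)) = (n+1) * kFib 2 (n + 2) := by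
    intro n
    induction n with
    | zero =>
        constructor
        · simp [SA, SB, P, occ00]
        · simp [SA, SB, P, occ00, kFib]
    | succ n ih =>
        refine ⟨ih.2, ?_⟩
        have e : kFib 2 (n + 3) = 2 * kFib 2 (n + 2) + kFib 2 (n + 1) := rfl
        have h1 := ih.1
        have h2 := ih.2
        have ha := SA_rec n
        have hb := SB_rec n
        show 2 * (SA (n+2) + SB (n+2)) = (n+2) * kFib 2 (n + 3)
        rw [ha, hb, e]
        zify at h1 h2 ⊢
        linear_combination 2 * h2 + h1
  exact fun n => (key n).1

lemma genPell_A : ∀ {s : List ℕ}, GenPell 2 s → ∀ a b : List ℕ,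
    s = a ++ 0 :: b → GenPell 2 (a ++ 1 :: b) := by
  intro s h
  induction h with
  | nil => intro a b hab; exact absurd hab (by simp)
  | cons i s hi hs ih =>
      intro a b hab
      cases a with
      | nil =>
          simp only [List.nil_append, List.cons.injEq] at hab
          obtain ⟨rfl, rfl⟩ := hab
          exact GenPell.cons 1 _ (by norm_num) hs
      | cons x a' =>
          simp only [List.cons_append, List.cons.injEq] at hab
          obtain ⟨rfl, hab⟩ := hab
          exact GenPell.cons _ (a' ++ 1 :: b) hi (ih a' b hab)
  | kk s hs ih =>
      intro a b hab
      cases a with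
      | nil => simp at hab
      | cons x a'' =>
        cases a'' with
        | nil => simp at hab
        | cons y a' =>
          simp only [List.cons_append, List.cons.injEq] at hab
          obtain ⟨rfl, rfl, hab⟩ := hab
          exact GenPell.kk (a' ++ 1 :: b) (ih a' b hab)

lemma genPell_B : ∀ {s : List ℕ}, GenPell 2 s → ∀ a b : List ℕ,
    s = a ++ 0 :: 0 :: b → GenPell 2 (a ++ 2 :: 2 :: b) := by
  intro s h
  induction h with
  | nil => intro a b hab; exact absurd hab (by simp)
  | cons i s hi hs ih =>
      intro a b hab
      cases a with
      | nil =>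
          simp only [List.nil_append, List.cons.injEq] at hab
          obtain ⟨rfl, rfl⟩ := hab
          have hb : GenPell 2 b := by
            cases hs with
            | cons _ _ _ h => exact h
          exact GenPell.kk b hb
      | cons x a' =>
          simp only [List.cons_append, List.cons.injEq] at hab
          obtain ⟨rfl, hab⟩ := hab
          exact GenPell.cons _ (a' ++ 2 :: 2 :: b) hi (ih a' b hab)
  | kk s hs ih =>
      intro a b hab
      cases a with
      | nil => simp at hab
      | cons x a'' =>
        cases a'' with
        | nil => simp at hab
        | cons y a' =>
          simp only [List.cons_append, List.cons.injEq] at hab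
          obtain ⟨rfl, rfl, hab⟩ := hab
          exact GenPell.kk (a' ++ 2 :: 2 :: b) (ih a' b hab)

def mA (w : List ℕ) (p : ℕ) : List ℕ := w.set p 1
def mB (w : List ℕ) (p : ℕ) : List ℕ := (w.set p 2).set (p + 1) 2

def okA (w : List ℕ) (p : ℕ) : Prop := w[p]? = some 0
def okB (w : List ℕ) (p : ℕ) : Prop := w[p]? = some 0 ∧ w[p+1]? = some 0

lemma okA_lt {w : List ℕ} {p : ℕ} (h : okA w p) : p < w.length := by
  rw [okA, List.getElem?_eq_some_iff] at h; exact h.1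

lemma okB_lt {w : List ℕ} {p : ℕ} (h : okB w p) : p + 1 < w.length := by
  have := h.2; rw [List.getElem?_eq_some_iff] at this; exact this.1

lemma mA_get {w : List ℕ} {p : ℕ} (h : okA w p) (q : ℕ) :
    (mA w p)[q]? = if p = q then some 1 else w[q]? := by
  rw [mA, List.getElem?_set]
  split_ifs with h1 h2
  · rfl
  · exact absurd (okA_lt h) h2
  · rfl

lemma mB_get {w : List ℕ} {p : ℕ} (h : okB w p) (q : ℕ) :
    (mB w p)[q]? = if p = q ∨ p + 1 = q then some 2 else w[q]? := by
  have hlt := okB_lt h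
  rw [mB, List.getElem?_set, List.getElem?_set]
  simp only [List.length_set]
  split_ifs with h1 h2 h3 h4 h5 h6 <;> first | rfl | omega

lemma length_mA (w : List ℕ) (p : ℕ) : (mA w p).length = w.length := by
  simp [mA]

lemma length_mB (w : List ℕ) (p : ℕ) : (mB w p).length = w.length := by
  simp [mB]

lemma decomp_A {w : List ℕ} {p : ℕ} (h : okA w p) :
    w = w.take p ++ 0 :: w.drop (p + 1) := by
  rw [okA, List.getElem?_eq_some_iff] at h
  obtain ⟨h1, h2⟩ := h
  conv_lhs => rw [← List.take_append_drop p w]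
  rw [← List.getElem_cons_drop h1, h2]

lemma mA_eq {w : List ℕ} {p : ℕ} (h : okA w p) :
    mA w p = w.take p ++ 1 :: w.drop (p + 1) :=
  List.set_eq_take_cons_drop 1 (okA_lt h)

lemma decomp_B {w : List ℕ} {p : ℕ} (h : okB w p) :
    w = w.take p ++ 0 :: 0 :: w.drop (p + 2) := by
  have h1 := decomp_A h.1
  have h2 := h.2
  rw [List.getElem?_eq_some_iff] at h2
  obtain ⟨hl, hv⟩ := h2
  conv_lhs => rw [h1]
  congr 2
  rw [← List.getElem_cons_drop hl, hv]

lemma set_append_right' (a : List ℕ) (l : List ℕ) (k : ℕ) (x : ℕ) :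
    (a ++ l).set (a.length + k) x = a ++ l.set k x := by
  induction a with
  | nil => simp
  | cons y t ih => simpa [Nat.succ_add] using ih

lemma set_mid (a : List ℕ) (x : ℕ) (b : List ℕ) (y : ℕ) :
    (a ++ x :: b).set a.length y = a ++ y :: b := by
  simpa using set_append_right' a (x :: b) 0 y

lemma setset (a d : List ℕ) (p : ℕ) (hp : a.length = p) :
    ((a ++ 0 :: 0 :: d).set p 2).set (p + 1) 2 = a ++ 2 :: 2 :: d := by
  subst hp
  rw [set_mid a 0 (0 :: d) 2]
  have h2 := set_append_right' a ((2:ℕ) :: 0 :: d) 1 2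
  simpa using h2

lemma mB_eq {w : List ℕ} {p : ℕ} (h : okB w p) :
    mB w p = w.take p ++ 2 :: 2 :: w.drop (p + 2) := by
  have hp := okB_lt h
  have htk : (w.take p).length = p := List.length_take_of_le (by omega)
  have hd := decomp_B h
  rw [mB]
  conv_lhs => rw [hd]
  exact setset _ _ p htk

lemma prop_mA {n : ℕ} {w : List ℕ} {p : ℕ} (hw : w.length = n ∧ GenPell 2 w)
    (h : okA w p) : (mA w p).length = n ∧ GenPell 2 (mA w p) := by
  refine ⟨by rw [length_mA, hw.1], ?_⟩
  rw [mA_eq h]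
  exact genPell_A hw.2 _ _ (decomp_A h)

lemma prop_mB {n : ℕ} {w : List ℕ} {p : ℕ} (hw : w.length = n ∧ GenPell 2 w)
    (h : okB w p) : (mB w p).length = n ∧ GenPell 2 (mB w p) := by
  refine ⟨by rw [length_mB, hw.1], ?_⟩
  rw [mB_eq h]
  exact genPell_B hw.2 _ _ (decomp_B h)

lemma ne_mA {w : List ℕ} {p : ℕ} (h : okA w p) : w ≠ mA w p := by
  intro he
  have := mA_get h p
  rw [← he, if_pos rfl, h] at this
  simp at this

lemma ne_mB {w : List ℕ} {p : ℕ} (h : okB w p) : w ≠ mB w p := by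
  intro he
  have := mB_get h p
  rw [← he, if_pos (Or.inl rfl), h.1] at this
  simp at this

lemma relX_A {w : List ℕ} {p : ℕ} (h : okA w p) : munariniRel 2 w (mA w p) :=
  Or.inl ⟨w.take p, w.drop (p+1), 1, by norm_num, by norm_num, decomp_A h, mA_eq h⟩

lemma relX_B {w : List ℕ} {p : ℕ} (h : okB w p) : munariniRel 2 w (mB w p) :=
  Or.inr ⟨w.take p, w.drop (p+2), decomp_B h, mB_eq h⟩

lemma adj_A {n : ℕ} {w : List ℕ} {p : ℕ} (hw : w.length = n ∧ GenPell 2 w)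
    (h : okA w p) :
    (MunariniGraph n 2).Adj ⟨w, hw⟩ ⟨mA w p, prop_mA hw h⟩ := by
  rw [MunariniGraph, SimpleGraph.fromRel_adj]
  refine ⟨?_, Or.inl (relX_A h)⟩
  intro he
  exact ne_mA h (congrArg Subtype.val he)

lemma adj_B {n : ℕ} {w : List ℕ} {p : ℕ} (hw : w.length = n ∧ GenPell 2 w)
    (h : okB w p) :
    (MunariniGraph n 2).Adj ⟨w, hw⟩ ⟨mB w p, prop_mB hw h⟩ := by
  rw [MunariniGraph, SimpleGraph.fromRel_adj]
  refine ⟨?_, Or.inl (relX_B h)⟩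
  intro he
  exact ne_mB h (congrArg Subtype.val he)

def cond : List ℕ × ℕ × Bool → Prop := fun x =>
  match x.2.2 with
  | true => okB x.1 x.2.1
  | false => okA x.1 x.2.1

open Classical in
noncomputable def codes (n : ℕ) : Finset ((List ℕ × ℕ × Bool) × Bool) :=
  ((P n ×ˢ Finset.range n ×ˢ (Finset.univ : Finset Bool)).filter cond) ×ˢ
    (Finset.univ : Finset Bool)

lemma codes_mem {n : ℕ} {w : List ℕ} {p : ℕ} {ty dir : Bool}
    (h : ((w, p, ty), dir) ∈ codes n) : w.length = n ∧ GenPell 2 w := by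
  rw [codes] at h
  simp only [Finset.mem_product, Finset.mem_filter] at h
  exact of_mem_P n h.1.1.1

lemma codes_okA {n : ℕ} {w : List ℕ} {p : ℕ} {dir : Bool}
    (h : ((w, p, false), dir) ∈ codes n) : okA w p := by
  rw [codes] at h
  simp only [Finset.mem_product, Finset.mem_filter] at h
  exact h.1.2

lemma codes_okB {n : ℕ} {w : List ℕ} {p : ℕ} {dir : Bool}
    (h : ((w, p, true), dir) ∈ codes n) : okB w p := by
  rw [codes] at h
  simp only [Finset.mem_product, Finset.mem_filter] at h
  exact h.1.2

lemma codes_intro {n : ℕ} {w : List ℕ} {p : ℕ} (ty dir : Bool)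
    (hw : w ∈ P n) (hp : p < n)
    (hc : cond ((w, p, ty))) : ((w, p, ty), dir) ∈ codes n := by
  rw [codes]
  simp only [Finset.mem_product, Finset.mem_filter, Finset.mem_range,
    Finset.mem_univ, and_true]
  exact ⟨⟨hw, hp⟩, hc⟩

noncomputable def toDart (n : ℕ) (a : (List ℕ × ℕ × Bool) × Bool)
    (ha : a ∈ codes n) : (MunariniGraph n 2).Dart :=
  match a, ha with
  | ((w, p, false), true), ha =>
      ⟨(⟨w, codes_mem ha⟩, ⟨mA w p, prop_mA (codes_mem ha) (codes_okA ha)⟩),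
        adj_A (codes_mem ha) (codes_okA ha)⟩
  | ((w, p, false), false), ha =>
      ⟨(⟨mA w p, prop_mA (codes_mem ha) (codes_okA ha)⟩, ⟨w, codes_mem ha⟩),
        (adj_A (codes_mem ha) (codes_okA ha)).symm⟩
  | ((w, p, true), true), ha =>
      ⟨(⟨w, codes_mem ha⟩, ⟨mB w p, prop_mB (codes_mem ha) (codes_okB ha)⟩),
        adj_B (codes_mem ha) (codes_okB ha)⟩
  | ((w, p, true), false), ha =>
      ⟨(⟨mB w p, prop_mB (codes_mem ha) (codes_okB ha)⟩, ⟨w, codes_mem ha⟩),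
        (adj_B (codes_mem ha) (codes_okB ha)).symm⟩

lemma K_AA {w : List ℕ} {p q : ℕ} (hp : okA w p) (hq : okA w q)
    (h : mA w p = mA w q) : p = q := by
  by_contra hne
  have e : (if p = p then some 1 else w[p]?) = (if q = p then some 1 else w[p]?) := by
    rw [← mA_get hp p, ← mA_get hq p, h]
  rw [if_pos rfl, if_neg (by omega : ¬ q = p)] at e
  rw [hp] at e
  simp at e

lemma K_BB {w : List ℕ} {p q : ℕ} (hp : okB w p) (hq : okB w q)
    (h : mB w p = mB w q) : p = q := by
  by_contra hne
  have e : (if p = p ∨ p + 1 = p then some 2 else w[p]?)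
      = (if q = p ∨ q + 1 = p then some 2 else w[p]?) := by
    rw [← mB_get hp p, ← mB_get hq p, h]
  rw [if_pos (show p = p ∨ p + 1 = p from Or.inl rfl)] at e
  by_cases hc : q = p ∨ q + 1 = p
  · have e2 : (if p = q ∨ p + 1 = q then some 2 else w[q]?)
        = (if q = q ∨ q + 1 = q then some 2 else w[q]?) := by
      rw [← mB_get hp q, ← mB_get hq q, h]
    rw [if_pos (show q = q ∨ q + 1 = q from Or.inl rfl),
      if_neg (by omega : ¬ (p = q ∨ p + 1 = q))] at e2
    rw [hq.1] at e2
    simp at e2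
  · rw [if_neg hc] at e
    rw [hp.1] at e
    simp at e

lemma K_AB {w : List ℕ} {p q : ℕ} (hp : okA w p) (hq : okB w q) :
    mA w p ≠ mB w q := by
  intro h
  have e : (if p = q then some 1 else w[q]?)
      = (if q = q ∨ q + 1 = q then some 2 else w[q]?) := by
    rw [← mA_get hp q, ← mB_get hq q, h]
  rw [if_pos (show q = q ∨ q + 1 = q from Or.inl rfl)] at e
  by_cases h3 : p = q
  · rw [if_pos h3] at e; simp at e
  · rw [if_neg h3, hq.1] at e; simp at e

lemma K_revAA {w₁ w₂ : List ℕ} {p q : ℕ} (hp : okA w₁ p) (hq : okA w₂ q)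
    (h1 : w₁ = mA w₂ q) (h2 : mA w₁ p = w₂) : False := by
  have e1 : w₁[p]? = if q = p then some 1 else w₂[p]? := by rw [h1, mA_get hq p]
  have e2 : (if p = p then some 1 else w₁[p]?) = w₂[p]? := by rw [← mA_get hp p, h2]
  rw [if_pos rfl] at e2
  rw [hp] at e1
  by_cases h3 : q = p
  · rw [if_pos h3] at e1; simp at e1
  · rw [if_neg h3, ← e2] at e1; simp at e1

lemma K_revAB {w₁ w₂ : List ℕ} {p q : ℕ} (hp : okA w₁ p) (hq : okB w₂ q)
    (h1 : w₁ = mB w₂ q) (h2 : mA w₁ p = w₂) : False := by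
  have e1 : w₁[q]? = if q = q ∨ q + 1 = q then some 2 else w₂[q]? := by
    rw [h1, mB_get hq q]
  rw [if_pos (show q = q ∨ q + 1 = q from Or.inl rfl)] at e1
  have e2 : (if p = q then some 1 else w₁[q]?) = w₂[q]? := by rw [← mA_get hp q, h2]
  rw [hq.1] at e2
  by_cases h3 : p = q
  · rw [if_pos h3] at e2; simp at e2
  · rw [if_neg h3, e1] at e2; simp at e2

lemma K_revBA {w₁ w₂ : List ℕ} {p q : ℕ} (hp : okB w₁ p) (hq : okA w₂ q)
    (h1 : w₁ = mA w₂ q) (h2 : mB w₁ p = w₂) : False :=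
  K_revAB hq hp h2.symm h1.symm

lemma K_revBB {w₁ w₂ : List ℕ} {p q : ℕ} (hp : okB w₁ p) (hq : okB w₂ q)
    (h1 : w₁ = mB w₂ q) (h2 : mB w₁ p = w₂) : False := by
  have e1 : w₁[q]? = if q = q ∨ q + 1 = q then some 2 else w₂[q]? := by
    rw [h1, mB_get hq q]
  rw [if_pos (show q = q ∨ q + 1 = q from Or.inl rfl)] at e1
  have e2 : (if p = q ∨ p + 1 = q then some 2 else w₁[q]?) = w₂[q]? := by
    rw [← mB_get hp q, h2]
  rw [hq.1] at e2
  by_cases h3 : p = q ∨ p + 1 = q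
  · rw [if_pos h3] at e2; simp at e2
  · rw [if_neg h3, e1] at e2; simp at e2

lemma toDart_inj (n : ℕ) : ∀ (a₁ : (List ℕ × ℕ × Bool) × Bool) (ha₁ : a₁ ∈ codes n)
    (a₂ : (List ℕ × ℕ × Bool) × Bool) (ha₂ : a₂ ∈ codes n),
    toDart n a₁ ha₁ = toDart n a₂ ha₂ → a₁ = a₂ := by
  rintro ⟨⟨w₁, p₁, ty₁⟩, d₁⟩ ha₁ ⟨⟨w₂, p₂, ty₂⟩, d₂⟩ ha₂ h
  cases ty₁ <;> cases d₁ <;> cases ty₂ <;> cases d₂ <;>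
    simp only [toDart, SimpleGraph.Dart.ext_iff, Prod.mk.injEq, Subtype.mk.injEq] at h <;>
    obtain ⟨h1, h2⟩ := h
  · obtain rfl := h2
    obtain rfl := K_AA (codes_okA ha₁) (codes_okA ha₂) h1
    rfl
  · exact (K_revAA (codes_okA ha₁) (codes_okA ha₂) h2 h1).elim
  · obtain rfl := h2
    exact (K_AB (codes_okA ha₁) (codes_okB ha₂) h1).elim
  · exact (K_revAB (codes_okA ha₁) (codes_okB ha₂) h2 h1).elim
  · exact (K_revAA (codes_okA ha₁) (codes_okA ha₂) h1 h2).elim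
  · obtain rfl := h1
    obtain rfl := K_AA (codes_okA ha₁) (codes_okA ha₂) h2
    rfl
  · exact (K_revAB (codes_okA ha₁) (codes_okB ha₂) h1 h2).elim
  · obtain rfl := h1
    exact (K_AB (codes_okA ha₁) (codes_okB ha₂) h2).elim
  · obtain rfl := h2
    exact (K_AB (codes_okA ha₂) (codes_okB ha₁) h1.symm).elim
  · exact (K_revBA (codes_okB ha₁) (codes_okA ha₂) h2 h1).elim
  · obtain rfl := h2
    obtain rfl := K_BB (codes_okB ha₁) (codes_okB ha₂) h1
    rfl
  · exact (K_revBB (codes_okB ha₁) (codes_okB ha₂) h2 h1).elim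
  · exact (K_revBA (codes_okB ha₁) (codes_okA ha₂) h1 h2).elim
  · obtain rfl := h1
    exact (K_AB (codes_okA ha₂) (codes_okB ha₁) h2.symm).elim
  · exact (K_revBB (codes_okB ha₁) (codes_okB ha₂) h1 h2).elim
  · obtain rfl := h1
    obtain rfl := K_BB (codes_okB ha₁) (codes_okB ha₂) h2
    rfl

lemma getmid (a : List ℕ) (x : ℕ) (b : List ℕ) : (a ++ x :: b)[a.length]? = some x := by
  rw [List.getElem?_append_right (le_refl _)]
  simp

lemma getmid2 (a : List ℕ) (x y : ℕ) (b : List ℕ) :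
    (a ++ x :: y :: b)[a.length + 1]? = some y := by
  rw [List.getElem?_append_right (by omega)]
  simp

lemma rel_inv {x y : List ℕ} (h : munariniRel 2 x y) :
    (∃ p, okA x p ∧ y = mA x p) ∨ (∃ p, okB x p ∧ y = mB x p) := by
  rcases h with ⟨a, b, i, hi0, hi2, hx, hy⟩ | ⟨a, b, hx, hy⟩
  · left
    refine ⟨a.length, ?_, ?_⟩
    · rw [okA, hx]; exact getmid a 0 b
    · have hi : i = 1 := by omega
      subst hi
      rw [hy, mA, hx, set_mid a 0 b 1]
  · right
    refine ⟨a.length, ⟨?_, ?_⟩, ?_⟩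
    · rw [hx]; exact getmid a 0 (0 :: b)
    · rw [hx]; exact getmid2 a 0 0 b
    · rw [hy, mB, hx, setset a b a.length rfl]

lemma toDart_surj (n : ℕ) (d : (MunariniGraph n 2).Dart) :
    ∃ a, ∃ ha : a ∈ codes n, toDart n a ha = d := by
  obtain ⟨⟨u, v⟩, hadj⟩ := d
  have hadj' := hadj
  rw [MunariniGraph, SimpleGraph.fromRel_adj] at hadj'
  obtain ⟨hne, hrel⟩ := hadj'
  rcases hrel with hrel | hrel
  · rcases rel_inv hrel with ⟨p, hok, hy⟩ | ⟨p, hok, hy⟩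
    · have hp : p < n := by have := okA_lt hok; rw [u.2.1] at this; exact this
      refine ⟨((u.val, p, false), true),
        codes_intro false true ((mem_P n u.val).mpr u.2) hp hok, ?_⟩
      apply SimpleGraph.Dart.ext
      simp only [toDart]
      refine Prod.ext (Subtype.ext rfl) (Subtype.ext ?_)
      exact hy.symm
    · have hp : p < n := by have := okB_lt hok; rw [u.2.1] at this; omega
      refine ⟨((u.val, p, true), true),
        codes_intro true true ((mem_P n u.val).mpr u.2) hp hok, ?_⟩
      apply SimpleGraph.Dart.ext
      simp only [toDart]
      refine Prod.ext (Subtype.ext rfl) (Subtype.ext ?_)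
      exact hy.symm
  · rcases rel_inv hrel with ⟨p, hok, hy⟩ | ⟨p, hok, hy⟩
    · have hp : p < n := by have := okA_lt hok; rw [v.2.1] at this; exact this
      refine ⟨((v.val, p, false), false),
        codes_intro false false ((mem_P n v.val).mpr v.2) hp hok, ?_⟩
      apply SimpleGraph.Dart.ext
      simp only [toDart]
      refine Prod.ext (Subtype.ext ?_) (Subtype.ext rfl)
      exact hy.symm
    · have hp : p < n := by have := okB_lt hok; rw [v.2.1] at this; omega
      refine ⟨((v.val, p, true), false),
        codes_intro true false ((mem_P n v.val).mpr v.2) hp hok, ?_⟩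
      apply SimpleGraph.Dart.ext
      simp only [toDart]
      refine Prod.ext (Subtype.ext ?_) (Subtype.ext rfl)
      exact hy.symm

lemma sum_okA (w : List ℕ) :
    (∑ p ∈ Finset.range w.length, if w[p]? = some 0 then 1 else 0) = w.count 0 := by
  induction w with
  | nil => simp
  | cons x s ih =>
      rw [List.length_cons, Finset.sum_range_succ']
      simp only [List.getElem?_cons_succ, List.getElem?_cons_zero]
      rw [ih, List.count_cons]
      simp [beq_iff_eq]

lemma sum_okB (w : List ℕ) :
    (∑ p ∈ Finset.range w.length,
      if w[p]? = some 0 ∧ w[p+1]? = some 0 then 1 else 0) = occ00 w := by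
  induction w with
  | nil => simp [occ00]
  | cons x s ih =>
      rw [List.length_cons, Finset.sum_range_succ']
      simp only [List.getElem?_cons_succ, List.getElem?_cons_zero]
      rw [ih, occ00_cons]
      simp only [Option.some_inj]
      omega

lemma codes_card (n : ℕ) : (codes n).card = 2 * (SA n + SB n) := by
  classical
  rw [codes, Finset.card_product, Finset.card_filter, Finset.sum_product]
  have key : ∀ w ∈ P n,
      (∑ y ∈ Finset.range n ×ˢ (Finset.univ : Finset Bool),
        if cond (w, y) then 1 else 0) = w.count 0 + occ00 w := by
    intro w hw
    have hl := (of_mem_P n hw).1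
    rw [Finset.sum_product]
    have inner : ∀ p : ℕ, (∑ ty : Bool, if cond (w, p, ty) then 1 else 0)
        = ((if w[p]? = some 0 ∧ w[p+1]? = some 0 then 1 else 0)
          + (if w[p]? = some 0 then 1 else 0)) := by
      intro p
      rw [Fintype.sum_bool]
      simp only [cond, okA, okB]
      split_ifs with h <;> simp [h] <;> congr
    rw [Finset.sum_congr rfl (fun p _ => inner p), Finset.sum_add_distrib, ← hl,
      sum_okA w, sum_okB w]
    omega
  rw [Finset.sum_congr rfl key, Finset.sum_add_distrib]
  rw [show (Finset.univ : Finset Bool).card = 2 from rfl]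
  rw [SA, SB]
  ring

end MunAux

/-- `2·|E(M_{n,2})| = n·F_{n+1,2}` for `n ≥ 1`. -/

theorem munarini_pell_size (n : ℕ) (hn : 1 ≤ n) :
    2 * (MunariniGraph n 2).edgeSet.ncard = n * kFib 2 (n + 1) := by
  classical
  letI : Fintype (PellVtx n 2) := Fintype.subtype (MunAux.P n) (MunAux.mem_P n)
  letI : DecidableRel (MunariniGraph n 2).Adj := Classical.decRel _
  have hdart : Fintype.card (MunariniGraph n 2).Dart
      = 2 * (MunariniGraph n 2).edgeFinset.card :=
    SimpleGraph.dart_card_eq_twice_card_edges _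
  have hbij : (MunAux.codes n).card = Fintype.card (MunariniGraph n 2).Dart :=
    Finset.card_bij (MunAux.toDart n) (fun a ha => Finset.mem_univ _)
      (MunAux.toDart_inj n)
      (fun d _ => ⟨(MunAux.toDart_surj n d).choose,
        (MunAux.toDart_surj n d).choose_spec⟩)
  have hE : (MunariniGraph n 2).edgeSet.ncard
      = (MunariniGraph n 2).edgeFinset.card := by
    rw [← SimpleGraph.coe_edgeFinset, Set.ncard_coe_finset]
  rw [hE, ← hdart, ← hbij, MunAux.codes_card]
  exact MunAux.key_identity n
end

section
/- For every k ≥ 1 and n ≥ 0, the map Ψ̂ is a graph isomorphism from the Munarini graph M_{n,k} onto Γ*_{n,k}, the subgraph of the hypercube Q_{kn} induced by the Munarini strings of length kn. -/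
namespace PsiAux

open List

lemma blockA_length {k i : ℕ} (h : i ≤ k) : (blockA k i).length = k := by
  unfold blockA; split <;> simp <;> omega

lemma psi_nil (k : ℕ) : psi k [] = [] := rfl

lemma psi_cons {k i : ℕ} (hik : i ≠ k) (s : List ℕ) :
    psi k (i :: s) = blockA k i ++ psi k s := by
  cases s with
  | nil => simp [psi]
  | cons j t => simp [psi, hik]

lemma psi_kk (k : ℕ) (s : List ℕ) :
    psi k (k :: k :: s) = blockA k k ++ (blockA k 0 ++ psi k s) := by
  simp [psi]

lemma rep_true_inj : ∀ (a b : ℕ) (x y : List Bool),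
    List.replicate a false ++ true :: x = List.replicate b false ++ true :: y →
    a = b ∧ x = y
  | 0, 0, x, y, h => by simpa using h
  | 0, b+1, x, y, h => by simp [List.replicate_succ] at h
  | a+1, 0, x, y, h => by simp [List.replicate_succ] at h
  | a+1, b+1, x, y, h => by
      simp only [List.replicate_succ, List.cons_append, List.cons.injEq] at h
      obtain ⟨h1, h2⟩ := rep_true_inj a b x y h.2
      exact ⟨by omega, h2⟩

lemma true_mem_blockA {k j : ℕ} (hj : j ≠ 0) : true ∈ blockA k j := by
  simp [blockA, hj, List.count_replicate]

lemma blockA_inj {k i j : ℕ} (h : blockA k i = blockA k j) : i = j := by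
  unfold blockA at h
  by_cases hi : i = 0 <;> by_cases hj : j = 0 <;> simp [hi, hj] at h ⊢
  · have : (true : Bool) ∈ List.replicate k false := by
      rw [h]; simp
    simp at this
  · have : (true : Bool) ∈ List.replicate k false := by
      rw [← h]; simp
    simp at this
  · obtain ⟨h1, _⟩ := rep_true_inj _ _ _ _ h
    omega

lemma count_blockA {k j : ℕ} (hj : j ≠ 0) : (blockA k j).count true = 1 := by
  simp [blockA, hj, List.count_append, List.count_replicate]

lemma block_flip {k i j : ℕ} {A C : List Bool}
    (h1 : blockA k i = A ++ false :: C) (h2 : blockA k j = A ++ true :: C) :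
    i = 0 ∧ 1 ≤ j := by
  have hj : j ≠ 0 := by
    rintro rfl
    have : (true : Bool) ∈ blockA k 0 := by rw [h2]; simp
    simp [blockA] at this
  refine ⟨?_, Nat.one_le_iff_ne_zero.2 hj⟩
  by_contra hi0
  have ci := count_blockA (k := k) hi0
  have cj := count_blockA (k := k) hj
  rw [h1] at ci; rw [h2] at cj
  simp [List.count_append] at ci cj
  omega

lemma split_diff : ∀ (x y P Q A B : List Bool), x.length = y.length →
    x ++ P = A ++ false :: B → y ++ Q = A ++ true :: B →
    (x = y ∧ ∃ A', A = x ++ A' ∧ P = A' ++ false :: B ∧ Q = A' ++ true :: B) ∨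
    (∃ C, x = A ++ false :: C ∧ y = A ++ true :: C ∧ P = Q)
  | [], y, P, Q, A, B, hl, h1, h2 => by
      have hy : y = [] := List.eq_nil_of_length_eq_zero hl.symm
      subst hy
      exact Or.inl ⟨rfl, A, rfl, h1, h2⟩
  | a :: x, y, P, Q, A, B, hl, h1, h2 => by
      cases y with
      | nil => simp at hl
      | cons b y =>
        cases A with
        | nil =>
          simp only [List.nil_append, List.cons_append, List.cons.injEq] at h1 h2
          have := List.append_inj (h1.2.trans h2.2.symm) (by simpa using hl)
          exact Or.inr ⟨x, by simp [h1.1], by simp [h2.1, this.1], this.2⟩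
        | cons c A =>
          simp only [List.cons_append, List.cons.injEq] at h1 h2
          rcases split_diff x y P Q A B (by simpa using hl) h1.2 h2.2 with
            ⟨hxy, A', rfl, hP, hQ⟩ | ⟨C, hx, hy, hPQ⟩
          · exact Or.inl ⟨by rw [hxy, h1.1, h2.1], A', by simp [h1.1], hP, hQ⟩
          · exact Or.inr ⟨C, by simp [hx, h1.1], by simp [hy, h2.1], hPQ⟩

lemma genPell_split {k : ℕ} {u : List ℕ} (hu : GenPell k u) :
    ∀ a x r, u = a ++ x :: r → x ≠ k → GenPell k a ∧ GenPell k (x :: r) := by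
  induction hu with
  | nil => intro a x r h _; exact absurd h (by simp)
  | cons i s hi hs ih =>
    intro a x r h hx
    cases a with
    | nil =>
      simp only [List.nil_append, List.cons.injEq] at h
      obtain ⟨rfl, rfl⟩ := h
      exact ⟨GenPell.nil, GenPell.cons _ _ hi hs⟩
    | cons c a =>
      simp only [List.cons_append, List.cons.injEq] at h
      obtain ⟨rfl, h⟩ := h
      obtain ⟨h1, h2⟩ := ih a x r h hx
      exact ⟨GenPell.cons _ _ hi h1, h2⟩
  | kk s hs ih =>
    intro a x r h hx
    match a, h with
    | [], h =>
      simp only [List.nil_append, List.cons.injEq] at h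
      exact absurd h.1.symm hx
    | [c], h =>
      simp only [List.cons_append, List.nil_append, List.cons.injEq] at h
      exact absurd h.2.1.symm hx
    | c :: c' :: a, h =>
      simp only [List.cons_append, List.cons.injEq] at h
      obtain ⟨rfl, rfl, h⟩ := h
      obtain ⟨h1, h2⟩ := ih a x r h hx
      exact ⟨GenPell.kk _ h1, h2⟩

lemma genPell_tail {k x : ℕ} {r : List ℕ} (h : GenPell k (x :: r)) (hx : x ≠ k) :
    GenPell k r := by
  cases h with
  | cons i s hi hs => exact hs
  | kk s hs => exact absurd rfl hx

lemma psi_append {k : ℕ} {a : List ℕ} (ha : GenPell k a) (t : List ℕ) :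
    psi k (a ++ t) = psi k a ++ psi k t := by
  induction ha with
  | nil => simp [psi_nil]
  | cons i s hi hs ih =>
    have hik : i ≠ k := Nat.ne_of_lt hi
    rw [List.cons_append, psi_cons hik, psi_cons hik, ih, List.append_assoc]
  | kk s hs ih =>
    rw [List.cons_append, List.cons_append, psi_kk, psi_kk, ih]
    simp [List.append_assoc]

lemma psi_length {k : ℕ} {u : List ℕ} (hu : GenPell k u) :
    (psi k u).length = k * u.length := by
  induction hu with
  | nil => simp [psi_nil]
  | cons i s hi hs ih =>
    rw [psi_cons (Nat.ne_of_lt hi)]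
    simp [blockA_length (Nat.le_of_lt hi), ih, Nat.mul_succ]
    omega
  | kk s hs ih =>
    rw [psi_kk]
    simp [blockA_length (le_refl k), blockA_length (Nat.zero_le k), ih, Nat.mul_succ]
    omega

lemma psi_mun {k : ℕ} {u : List ℕ} (hu : GenPell k u) : MunariniStr k (psi k u) := by
  induction hu with
  | nil => exact MunariniStr.nil
  | cons i s hi hs ih => rw [psi_cons (Nat.ne_of_lt hi)]; exact MunariniStr.block i _ hi ih
  | kk s hs ih => rw [psi_kk]; exact MunariniStr.kblock _ ih

lemma blockA_ne_nil {k i : ℕ} (hk : 1 ≤ k) (hi : i ≤ k) : blockA k i ≠ [] := by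
  intro h
  have := blockA_length (k := k) hi
  rw [h] at this
  simp at this
  omega

lemma psi_inj {k : ℕ} (hk : 1 ≤ k) {u : List ℕ} (hu : GenPell k u) :
    ∀ v, GenPell k v → psi k u = psi k v → u = v := by
  induction hu with
  | nil =>
    intro v hv h
    cases hv with
    | nil => rfl
    | cons j t hj ht =>
      rw [psi_nil, psi_cons (Nat.ne_of_lt hj)] at h
      exact absurd (List.append_eq_nil_iff.1 h.symm).1 (blockA_ne_nil hk (Nat.le_of_lt hj))
    | kk t ht =>
      rw [psi_nil, psi_kk] at h
      exact absurd (List.append_eq_nil_iff.1 h.symm).1 (blockA_ne_nil hk (le_refl k))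
  | cons i s hi hs ih =>
    intro v hv h
    cases hv with
    | nil =>
      rw [psi_nil, psi_cons (Nat.ne_of_lt hi)] at h
      exact absurd (List.append_eq_nil_iff.1 h).1 (blockA_ne_nil hk (Nat.le_of_lt hi))
    | cons j t hj ht =>
      rw [psi_cons (Nat.ne_of_lt hi), psi_cons (Nat.ne_of_lt hj)] at h
      obtain ⟨h1, h2⟩ := List.append_inj h
        (by rw [blockA_length (Nat.le_of_lt hi), blockA_length (Nat.le_of_lt hj)])
      rw [blockA_inj h1, ih t ht h2]
    | kk t ht =>
      rw [psi_cons (Nat.ne_of_lt hi), psi_kk] at h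
      obtain ⟨h1, h2⟩ := List.append_inj h
        (by rw [blockA_length (Nat.le_of_lt hi), blockA_length (le_refl k)])
      exact absurd (blockA_inj h1) (Nat.ne_of_lt hi)
  | kk s hs ih =>
    intro v hv h
    cases hv with
    | nil =>
      rw [psi_nil, psi_kk] at h
      exact absurd (List.append_eq_nil_iff.1 h).1 (blockA_ne_nil hk (le_refl k))
    | cons j t hj ht =>
      rw [psi_kk, psi_cons (Nat.ne_of_lt hj)] at h
      obtain ⟨h1, h2⟩ := List.append_inj h
        (by rw [blockA_length (Nat.le_of_lt hj), blockA_length (le_refl k)])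
      exact absurd (blockA_inj h1).symm (Nat.ne_of_lt hj)
    | kk t ht =>
      rw [psi_kk, psi_kk] at h
      have h2 := (List.append_inj h (by rfl)).2
      have h3 := (List.append_inj h2 (by rfl)).2
      rw [ih t ht h3]

lemma psi_surj {k : ℕ} {m : List Bool} (hm : MunariniStr k m) :
    ∃ s, GenPell k s ∧ psi k s = m := by
  induction hm with
  | nil => exact ⟨[], GenPell.nil, rfl⟩
  | block i s hi hs ih =>
    obtain ⟨t, ht, hpt⟩ := ih
    exact ⟨i :: t, GenPell.cons _ _ hi ht, by rw [psi_cons (Nat.ne_of_lt hi), hpt]⟩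
  | kblock s hs ih =>
    obtain ⟨t, ht, hpt⟩ := ih
    exact ⟨k :: k :: t, GenPell.kk _ ht, by rw [psi_kk, hpt]⟩

lemma rep_split {k i : ℕ} (h1 : 1 ≤ i) (h2 : i ≤ k) :
    List.replicate k (false : Bool)
      = List.replicate (i-1) false ++ false :: List.replicate (k-i) false := by
  have h3 : false :: List.replicate (k-i) (false : Bool) = List.replicate (k-i+1) false :=
    List.replicate_succ.symm
  rw [h3, ← List.replicate_add]
  congr 1
  omega

lemma rel_cons {k c : ℕ} {s t : List ℕ} (h : munariniRel k s t) :
    munariniRel k (c :: s) (c :: t) := by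
  rcases h with ⟨a, b, i, h1, h2, rfl, rfl⟩ | ⟨a, b, rfl, rfl⟩
  · exact Or.inl ⟨c :: a, b, i, h1, h2, rfl, rfl⟩
  · exact Or.inr ⟨c :: a, b, rfl, rfl⟩

lemma rel_to_diff {k : ℕ} (hk : 1 ≤ k) {u v : List ℕ} (hu : GenPell k u)
    (h : munariniRel k u v) : diffOne (psi k u) (psi k v) := by
  have h0k : (0 : ℕ) ≠ k := by omega
  rcases h with ⟨a, b, i, hi0, hik, rfl, rfl⟩ | ⟨a, b, rfl, rfl⟩
  · obtain ⟨ha, h0b⟩ := genPell_split hu a 0 b rfl h0k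
    rw [psi_append ha, psi_append ha, psi_cons h0k, psi_cons (Nat.ne_of_lt hik)]
    refine ⟨psi k a ++ List.replicate (i-1) false,
      List.replicate (k-i) false ++ psi k b, ?_, ?_⟩
    · have hb0 : blockA k 0 = List.replicate (i-1) false ++ false :: List.replicate (k-i) false := by
        rw [blockA]; simp only [if_pos rfl]; exact rep_split hi0 (Nat.le_of_lt hik)
      rw [hb0]; simp [List.append_assoc]
    · have hbi : blockA k i = List.replicate (i-1) false ++ true :: List.replicate (k-i) false := by
        rw [blockA]; simp [Nat.pos_iff_ne_zero.1 hi0]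
      rw [hbi]; simp [List.append_assoc]
  · obtain ⟨ha, h0b⟩ := genPell_split hu a 0 (0 :: b) rfl h0k
    rw [psi_append ha, psi_append ha, psi_cons h0k, psi_cons h0k, psi_kk]
    refine ⟨psi k a ++ List.replicate (k-1) false, blockA k 0 ++ psi k b, ?_, ?_⟩
    · have hb0 : blockA k 0 = List.replicate (k-1) false ++ false :: List.replicate (k-k) false := by
        rw [blockA]; simp only [if_pos rfl]; exact rep_split hk (le_refl k)
      nth_rewrite 1 [hb0]
      simp [List.append_assoc, Nat.sub_self]
    · have hbk : blockA k k = List.replicate (k-1) false ++ true :: List.replicate (k-k) false := by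
        rw [blockA]; simp [Nat.pos_iff_ne_zero.1 hk]
      rw [hbk]
      simp [List.append_assoc, Nat.sub_self]

lemma diff_to_rel {k : ℕ} (hk : 1 ≤ k) {u : List ℕ} (hu : GenPell k u) :
    ∀ v, GenPell k v → u.length = v.length →
    ∀ A B, psi k u = A ++ false :: B → psi k v = A ++ true :: B →
    munariniRel k u v := by
  induction hu with
  | nil =>
    intro v hv hlen A B h1 h2
    rw [psi_nil] at h1
    exact absurd h1.symm (by simp)
  | cons i s hi hs ih =>
    intro v hv hlen A B h1 h2
    rw [psi_cons (Nat.ne_of_lt hi)] at h1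
    cases hv with
    | nil => simp at hlen
    | cons j t hj ht =>
      rw [psi_cons (Nat.ne_of_lt hj)] at h2
      rcases split_diff _ _ _ _ _ _
          (by rw [blockA_length (Nat.le_of_lt hi), blockA_length (Nat.le_of_lt hj)]) h1 h2 with
        ⟨hxy, A', rfl, hP, hQ⟩ | ⟨C, hx, hy, hPQ⟩
      · have hij := blockA_inj hxy
        subst hij
        exact rel_cons (ih t ht (by simpa using hlen) A' B hP hQ)
      · obtain ⟨hi0, hj1⟩ := block_flip hx hy
        subst hi0
        have hst : s = t := psi_inj hk hs t ht hPQ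
        subst hst
        exact Or.inl ⟨[], s, j, hj1, hj, rfl, rfl⟩
    | kk t ht =>
      rw [psi_kk] at h2
      rcases split_diff _ _ _ _ _ _
          (by rw [blockA_length (Nat.le_of_lt hi), blockA_length (le_refl k)]) h1 h2 with
        ⟨hxy, A', rfl, hP, hQ⟩ | ⟨C, hx, hy, hPQ⟩
      · exact absurd (blockA_inj hxy) (Nat.ne_of_lt hi)
      · obtain ⟨hi0, _⟩ := block_flip hx hy
        subst hi0
        -- hPQ : psi k s = blockA k 0 ++ psi k t
        have hslen : s.length = t.length + 1 := by simpa using hlen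
        cases hs with
        | nil => simp at hslen
        | cons c s' hc hs' =>
          rw [psi_cons (Nat.ne_of_lt hc)] at hPQ
          obtain ⟨hcb, hpst⟩ := List.append_inj hPQ
            (by rw [blockA_length (Nat.le_of_lt hc), blockA_length (Nat.zero_le k)])
          have hc0 : c = 0 := blockA_inj hcb
          subst hc0
          obtain rfl : s' = t := psi_inj hk hs' t ht hpst
          exact Or.inr ⟨[], s', rfl, rfl⟩
        | kk s' hs' =>
          rw [psi_kk] at hPQ
          obtain ⟨hcb, _⟩ := List.append_inj hPQ
            (by rw [blockA_length (le_refl k), blockA_length (Nat.zero_le k)])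
          exact absurd (blockA_inj hcb) (by omega)
  | kk s hs ih =>
    intro v hv hlen A B h1 h2
    rw [psi_kk] at h1
    cases hv with
    | nil => simp at hlen
    | cons j t hj ht =>
      rw [psi_cons (Nat.ne_of_lt hj)] at h2
      rcases split_diff _ _ _ _ _ _
          (by rw [blockA_length (le_refl k), blockA_length (Nat.le_of_lt hj)]) h1 h2 with
        ⟨hxy, A', rfl, hP, hQ⟩ | ⟨C, hx, hy, hPQ⟩
      · exact absurd (blockA_inj hxy).symm (Nat.ne_of_lt hj)
      · obtain ⟨hk0, _⟩ := block_flip hx hy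
        omega
    | kk t ht =>
      rw [psi_kk] at h2
      rcases split_diff _ _ _ _ _ _ (rfl : (blockA k k).length = (blockA k k).length) h1 h2 with
        ⟨_, A', rfl, hP, hQ⟩ | ⟨C, hx, hy, _⟩
      · rcases split_diff _ _ _ _ _ _ (rfl : (blockA k 0).length = (blockA k 0).length) hP hQ with
          ⟨_, A'', rfl, hP', hQ'⟩ | ⟨C', hx', hy', _⟩
        · have := ih t ht (by simpa using hlen) A'' B hP' hQ'
          exact rel_cons (rel_cons this)
        · rw [hx'] at hy'
          simp at hy'
      · rw [hx] at hy
        simp at hy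

end PsiAux

/-- `Ψ̂` is a graph isomorphism from `M_{n,k}` onto `Γ*_{n,k}`. -/
theorem psi_graph_iso (k n : ℕ) (hk : 1 ≤ k) :
    ∃ φ : MunariniGraph n k ≃g GammaStar n k,
      ∀ u : PellVtx n k, (φ u).val = psi k u.val := by
  classical
  let f : PellVtx n k → MunStrVtx n k := fun u =>
    ⟨psi k u.val, by rw [PsiAux.psi_length u.2.2, u.2.1], PsiAux.psi_mun u.2.2⟩
  have hinj : Function.Injective f := by
    intro u v h
    have : psi k u.val = psi k v.val := congrArg Subtype.val h
    exact Subtype.ext (PsiAux.psi_inj hk u.2.2 v.val v.2.2 this)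
  have hsurj : Function.Surjective f := by
    intro m
    obtain ⟨s, hs, hps⟩ := PsiAux.psi_surj m.2.2
    have hlen : s.length = n := by
      have h1 : (psi k s).length = k * s.length := PsiAux.psi_length hs
      rw [hps, m.2.1] at h1
      exact (Nat.eq_of_mul_eq_mul_left hk h1.symm)
    exact ⟨⟨s, hlen, hs⟩, Subtype.ext hps⟩
  let e : PellVtx n k ≃ MunStrVtx n k := Equiv.ofBijective f ⟨hinj, hsurj⟩
  refine ⟨⟨e, ?_⟩, fun u => rfl⟩
  intro u v
  show (GammaStar n k).Adj (f u) (f v) ↔ (MunariniGraph n k).Adj u v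
  rw [GammaStar, MunariniGraph, SimpleGraph.fromRel_adj, SimpleGraph.fromRel_adj]
  constructor
  · rintro ⟨hne, hd⟩
    refine ⟨fun h => hne (congrArg f h), ?_⟩
    rcases hd with h | h
    · obtain ⟨A, B, h1, h2⟩ := h
      exact Or.inl (PsiAux.diff_to_rel hk u.2.2 v.val v.2.2 (by rw [u.2.1, v.2.1]) A B h1 h2)
    · obtain ⟨A, B, h1, h2⟩ := h
      exact Or.inr (PsiAux.diff_to_rel hk v.2.2 u.val u.2.2 (by rw [u.2.1, v.2.1]) A B h1 h2)
  · rintro ⟨hne, hd⟩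
    refine ⟨fun h => hne (hinj h), ?_⟩
    rcases hd with h | h
    · exact Or.inl (PsiAux.rel_to_diff hk u.2.2 h)
    · exact Or.inr (PsiAux.rel_to_diff hk v.2.2 h)
end

section
/- For every k ≥ 1 and n ≥ 0, the set ℱ*_{n,k} of Munarini strings of length kn is median-closed in the hypercube: if u, v, w ∈ ℱ*_{n,k}, then the binary string m of length kn whose i-th bit is the majority value among the i-th bits of u, v, w also belongs to ℱ*_{n,k}. -/
lemma blockA_length {k i : ℕ} (h : i ≤ k) : (blockA k i).length = k := by
  unfold blockA
  split
  · simp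
  · simp only [List.length_append, List.length_replicate, List.length_cons]
    omega

lemma maj3_length : ∀ u v w : List Bool,
    (maj3 u v w).length = min u.length (min v.length w.length)
  | a :: u, b :: v, c :: w => by
      simp [maj3, maj3_length u v w]
  | [], v, w => by simp [maj3]
  | a :: u, [], w => by simp [maj3]
  | a :: u, b :: v, [] => by simp [maj3]

lemma maj3_getElem : ∀ (u v w : List Bool) (i : ℕ) (h1 : i < u.length)
    (h2 : i < v.length) (h3 : i < w.length),
    (maj3 u v w)[i]'(by rw [maj3_length]; omega) =
      ((u[i] && v[i]) || (u[i] && w[i]) || (v[i] && w[i]))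
  | a :: u, b :: v, c :: w, 0, _, _, _ => by simp [maj3]
  | a :: u, b :: v, c :: w, i + 1, h1, h2, h3 => by
      simp only [maj3, List.getElem_cons_succ]
      exact maj3_getElem u v w i (by simpa using h1) (by simpa using h2) (by simpa using h3)

lemma maj3_swap12 : ∀ u v w : List Bool, maj3 u v w = maj3 v u w
  | a :: u, b :: v, c :: w => by
      simp only [maj3, maj3_swap12 u v w]
      congr 1
      cases a <;> cases b <;> cases c <;> rfl
  | [], v, w => by cases v <;> cases w <;> rfl
  | a :: u, [], w => by cases w <;> rfl
  | a :: u, b :: v, [] => rfl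

lemma maj3_swap23 : ∀ u v w : List Bool, maj3 u v w = maj3 u w v
  | a :: u, b :: v, c :: w => by
      simp only [maj3, maj3_swap23 u v w]
      congr 1
      cases a <;> cases b <;> cases c <;> rfl
  | [], v, w => by cases v <;> cases w <;> rfl
  | a :: u, [], w => by cases w <;> rfl
  | a :: u, b :: v, [] => rfl

lemma maj3_self_left : ∀ u v : List Bool, u.length = v.length → maj3 u u v = u
  | [], v, h => by cases v <;> rfl
  | a :: u, c :: w, h => by
      simp only [maj3, maj3_self_left u w (by simpa using h)]
      congr 1
      cases a <;> cases c <;> rfl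

lemma maj3_append : ∀ (a b c u v w : List Bool), a.length = b.length → a.length = c.length →
    maj3 (a ++ u) (b ++ v) (c ++ w) = maj3 a b c ++ maj3 u v w
  | [], [], [], u, v, w, _, _ => rfl
  | x :: a, y :: b, z :: c, u, v, w, h1, h2 => by
      simp only [List.cons_append, maj3, List.append_eq,
        maj3_append a b c u v w (by simpa using h1) (by simpa using h2)]
  | [], y :: b, c, u, v, w, h1, h2 => by simp at h1
  | x :: a, [], c, u, v, w, h1, h2 => by simp at h1
  | x :: a, y :: b, [], u, v, w, h1, h2 => by simp at h2

lemma blockA_getElem {k i : ℕ} (hi : i ≤ k) (j : ℕ) (hj : j < k) :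
    (blockA k i)[j]'(by rw [blockA_length hi]; exact hj) = decide (i = j + 1) := by
  unfold blockA
  split
  · subst ‹i = 0›
    simp only [List.getElem_replicate]
    simp
  · rename_i hi0
    have h1 : 1 ≤ i := Nat.one_le_iff_ne_zero.mpr hi0
    by_cases hcase : j < i - 1
    · rw [List.getElem_append_left (by simpa using hcase)]
      simp only [List.getElem_replicate]
      have : ¬ (i = j + 1) := by omega
      simp [this]
    · rw [List.getElem_append_right (by simpa using hcase)]
      simp only [List.length_replicate]
      rcases Nat.eq_or_lt_of_le (Nat.le_of_not_lt hcase) with h | h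
      · have : j - (i - 1) = 0 := by omega
        simp only [this]
        simp only [List.getElem_cons_zero]
        have : i = j + 1 := by omega
        simp [this]
      · have hpos : j - (i - 1) = (j - i) + 1 := by omega
        simp only [hpos]
        simp only [List.getElem_cons_succ, List.getElem_replicate]
        have : ¬ (i = j + 1) := by omega
        simp [this]

lemma maj3_distinct_blocks {k a b c : ℕ} (ha : a ≤ k) (hb : b ≤ k) (hc : c ≤ k)
    (hab : a ≠ b) (hac : a ≠ c) (hbc : b ≠ c) :
    maj3 (blockA k a) (blockA k b) (blockA k c) = blockA k 0 := by
  apply List.ext_getElem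
  · rw [maj3_length, blockA_length ha, blockA_length hb, blockA_length hc,
      blockA_length (Nat.zero_le k)]
    omega
  · intro j hj1 hj2
    have hjk : j < k := by rwa [blockA_length (Nat.zero_le k)] at hj2
    rw [maj3_getElem _ _ _ j (by rw [blockA_length ha]; exact hjk)
      (by rw [blockA_length hb]; exact hjk) (by rw [blockA_length hc]; exact hjk)]
    rw [blockA_getElem ha j hjk, blockA_getElem hb j hjk, blockA_getElem hc j hjk,
      blockA_getElem (Nat.zero_le k) j hjk]
    by_cases h1 : a = j + 1 <;> by_cases h2 : b = j + 1 <;> by_cases h3 : c = j + 1 <;>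
      simp_all

lemma mun_decomp {k : ℕ} (hk : 1 ≤ k) {s : List Bool} (h : MunariniStr k s) (hs : s ≠ []) :
    ∃ i t, i ≤ k ∧ s = blockA k i ++ t ∧ s.length = k + t.length ∧ MunariniStr k t ∧
      (i = k → ∃ t', t = blockA k 0 ++ t' ∧ t.length = k + t'.length ∧ MunariniStr k t') := by
  cases h with
  | nil => exact absurd rfl hs
  | block i t hik ht =>
      exact ⟨i, t, Nat.le_of_lt hik, rfl,
        by simp [blockA_length (Nat.le_of_lt hik)], ht, fun hik' => absurd hik' (Nat.ne_of_lt hik)⟩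
  | kblock t ht =>
      refine ⟨k, blockA k 0 ++ t, le_refl k, rfl, ?_, .block 0 t hk ht,
        fun _ => ⟨t, rfl, by simp [blockA_length (Nat.zero_le k)], ht⟩⟩
      simp [blockA_length (le_refl k)]

/-- The set of Munarini strings of length `k·n` is median-closed: the
coordinatewise majority of three Munarini strings is again a Munarini string. -/
theorem munariniStr_median_closed (k n : ℕ) (hk : 1 ≤ k) (u v w : List Bool)
    (hu : u.length = k * n ∧ MunariniStr k u)
    (hv : v.length = k * n ∧ MunariniStr k v)
    (hw : w.length = k * n ∧ MunariniStr k w) :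
    (maj3 u v w).length = k * n ∧ MunariniStr k (maj3 u v w) := by
  induction n using Nat.strong_induction_on generalizing u v w with
  | _ n IH =>
  obtain ⟨hul, hum⟩ := hu
  obtain ⟨hvl, hvm⟩ := hv
  obtain ⟨hwl, hwm⟩ := hw
  rcases Nat.eq_zero_or_pos n with hn | hn
  · subst hn
    simp only [Nat.mul_zero] at hul hvl hwl ⊢
    rw [List.length_eq_zero_iff] at hul hvl hwl
    subst hul hvl hwl
    exact ⟨rfl, .nil⟩
  -- n ≥ 1
  obtain ⟨m, rfl⟩ : ∃ m, n = m + 1 := ⟨n - 1, by omega⟩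
  have hkm : k * (m + 1) = k * m + k := by ring
  have hne : ∀ x : List Bool, x.length = k * (m + 1) → x ≠ [] := by
    intro x hx hx'
    subst hx'
    simp at hx
    omega
  -- general pair step
  have pairCase : ∀ (j c : ℕ) (tu tv tw : List Bool), j ≤ k → c ≤ k →
      k * (m + 1) = k + tu.length → k * (m + 1) = k + tv.length →
      k * (m + 1) = k + tw.length →
      MunariniStr k tu → MunariniStr k tv → MunariniStr k tw →
      (j = k → (∃ t', tu = blockA k 0 ++ t' ∧ tu.length = k + t'.length ∧ MunariniStr k t') ∧
               (∃ t', tv = blockA k 0 ++ t' ∧ tv.length = k + t'.length ∧ MunariniStr k t')) →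
      (c = k → ∃ t', tw = blockA k 0 ++ t' ∧ tw.length = k + t'.length ∧ MunariniStr k t') →
      (maj3 (blockA k j ++ tu) (blockA k j ++ tv) (blockA k c ++ tw)).length = k * (m + 1) ∧
        MunariniStr k (maj3 (blockA k j ++ tu) (blockA k j ++ tv) (blockA k c ++ tw)) := by
    intro j c tu tv tw hj hc hltu hltv hltw hmtu hmtv hmtw hjk hck
    have hbj := blockA_length hj
    have hbc := blockA_length hc
    have hb0 := blockA_length (Nat.zero_le k)
    rw [maj3_append _ _ _ _ _ _ (by rw [hbj]) (by rw [hbj, hbc])]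
    rw [maj3_self_left _ _ (by rw [hbj, hbc])]
    rcases Nat.lt_or_ge j k with hjlt | hjge
    · -- j < k : tails are Munarini of length k*m
      have htu : tu.length = k * m := by omega
      have ih := IH m (by omega) tu tv tw ⟨by omega, hmtu⟩ ⟨by omega, hmtv⟩ ⟨by omega, hmtw⟩
      refine ⟨?_, .block j _ hjlt ih.2⟩
      simp only [List.length_append, hbj, ih.1]
      omega
    · -- j = k
      have hjk' : j = k := le_antisymm hj hjge
      obtain ⟨⟨tu', rfl, hltu', hmtu'⟩, ⟨tv', rfl, hltv', hmtv'⟩⟩ := hjk hjk'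
      -- second-block decomposition of tw
      have hwdec : ∃ d tw2, d ≤ k ∧ tw = blockA k d ++ tw2 ∧ tw.length = k + tw2.length ∧
          MunariniStr k tw2 := by
        rcases Nat.lt_or_ge c k with hclt | hcge
        · obtain ⟨d, tw2, hd, heq, hlen, hm2, _⟩ :=
            mun_decomp hk hmtw (by intro h; subst h; simp at hltw; omega)
          exact ⟨d, tw2, hd, heq, hlen, hm2⟩
        · obtain ⟨tw', rfl, hl', hm'⟩ := hck (le_antisymm hc hcge)
          exact ⟨0, tw', Nat.zero_le k, rfl, hl', hm'⟩
      obtain ⟨d, tw2, hd, rfl, hltw2, hmtw2⟩ := hwdec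
      have hbd := blockA_length hd
      rw [maj3_append _ _ _ _ _ _ (by rw [hb0]) (by rw [hb0, hbd])]
      rw [maj3_self_left _ _ (by rw [hb0, hbd])]
      -- m ≥ 1
      have hm1 : 1 ≤ m := by
        by_contra h
        have : m = 0 := by omega
        subst this
        simp only [List.length_append, hb0] at hltu
        omega
      obtain ⟨p, rfl⟩ : ∃ p, m = p + 1 := ⟨m - 1, by omega⟩
      have hkp : k * (p + 1 + 1) = k * p + k + k := by ring
      have hkp2 : k * (p + 1) = k * p + k := by ring
      simp only [List.length_append, hb0, hbd] at hltu hltv hltw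
      have ih := IH p (by omega) tu' tv' tw2 ⟨by omega, hmtu'⟩ ⟨by omega, hmtv'⟩
        ⟨by omega, hmtw2⟩
      rw [hjk']
      refine ⟨?_, .kblock _ ih.2⟩
      simp only [List.length_append, blockA_length (le_refl k), hb0, ih.1]
      omega
  -- decompose all three
  obtain ⟨a, tu, ha, hue, hul', hmtu, hua⟩ := mun_decomp hk hum (hne u hul)
  obtain ⟨b, tv, hb, hve, hvl', hmtv, hvb⟩ := mun_decomp hk hvm (hne v hvl)
  obtain ⟨c, tw, hcc, hwe, hwl', hmtw, hwc⟩ := mun_decomp hk hwm (hne w hwl)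
  subst hue hve hwe
  rw [hul] at hul'
  rw [hvl] at hvl'
  rw [hwl] at hwl'
  by_cases hab : a = b
  · subst hab
    exact pairCase a c tu tv tw ha hcc hul' hvl' hwl' hmtu hmtv hmtw
      (fun h => ⟨hua h, hvb h⟩) hwc
  by_cases hac : a = c
  · subst hac
    rw [maj3_swap23]
    exact pairCase a b tu tw tv ha hb hul' hwl' hvl' hmtu hmtw hmtv
      (fun h => ⟨hua h, hwc h⟩) hvb
  by_cases hbc : b = c
  · subst hbc
    rw [maj3_swap12, maj3_swap23]
    exact pairCase b a tv tw tu hb ha hvl' hwl' hul' hmtv hmtw hmtu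
      (fun h => ⟨hvb h, hwc h⟩) hua
  · -- all distinct
    rw [maj3_append _ _ _ _ _ _ (by rw [blockA_length ha, blockA_length hb])
      (by rw [blockA_length ha, blockA_length hcc])]
    rw [maj3_distinct_blocks ha hb hcc hab hac hbc]
    have ih := IH m (by omega) tu tv tw ⟨by omega, hmtu⟩ ⟨by omega, hmtv⟩ ⟨by omega, hmtw⟩
    refine ⟨?_, .block 0 _ hk ih.2⟩
    simp only [List.length_append, blockA_length (Nat.zero_le k), ih.1]
    omega
end

section
/- For every n ≥ 1 and k ≥ 1, the Munarini graph M_{n,k} is a median graph: every triple of its vertices admits a unique median with respect to the graph distance. -/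
namespace MunariniMedian

/-! ### Hamming distance on boolean lists -/

def ham : List Bool → List Bool → ℕ
  | a :: u, b :: v => (if a = b then 0 else 1) + ham u v
  | _, _ => 0

@[simp] lemma ham_nil_left (v : List Bool) : ham [] v = 0 := by cases v <;> rfl

@[simp] lemma ham_nil_right (u : List Bool) : ham u [] = 0 := by cases u <;> rfl

@[simp] lemma ham_cons (a b : Bool) (u v : List Bool) :
    ham (a :: u) (b :: v) = (if a = b then 0 else 1) + ham u v := rfl

@[simp] lemma ham_self (u : List Bool) : ham u u = 0 := by
  induction u with
  | nil => rfl
  | cons a u ih => simp [ih]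

lemma ham_comm (u v : List Bool) : ham u v = ham v u := by
  induction u generalizing v with
  | nil => simp
  | cons a u ih =>
    cases v with
    | nil => simp
    | cons b v => simp [ih, eq_comm]

lemma ham_triangle (u v w : List Bool) (h : u.length = w.length) :
    ham u v ≤ ham u w + ham w v := by
  induction u generalizing v w with
  | nil => simp
  | cons a u ih =>
    cases w with
    | nil => simp at h
    | cons c w =>
      cases v with
      | nil => simp
      | cons b v =>
        simp only [ham_cons]
        have := ih v w (by simpa using h)
        have hh : (if a = b then 0 else 1) ≤ (if a = c then 0 else 1) + (if c = b then 0 else 1) := by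
          by_cases h1 : a = b <;> by_cases h2 : a = c <;> by_cases h3 : c = b <;>
            simp_all
        omega

lemma ham_append (a : List Bool) {b : List Bool} (u v : List Bool) (h : a.length = b.length) :
    ham (a ++ u) (b ++ v) = ham a b + ham u v := by
  induction a generalizing b with
  | nil =>
    cases b with
    | nil => simp
    | cons _ _ => simp at h
  | cons x a ih =>
    cases b with
    | nil => simp at h
    | cons y b =>
      rw [List.cons_append, List.cons_append, ham_cons, ham_cons, ih (b:=b) (by simpa using h)]
      omega

lemma ham_eq_sum : ∀ (u v : List Bool), u.length = v.length →
    ham u v = ∑ p ∈ Finset.range u.length,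
      (if u.getD p false = v.getD p false then 0 else 1)
  | [], [], _ => by simp
  | a :: u, b :: v, h => by
    rw [List.length_cons, Finset.sum_range_succ']
    simp only [List.getD_cons_succ, List.getD_cons_zero, ham_cons]
    rw [ham_eq_sum u v (by simpa using h)]
    omega

end MunariniMedian
namespace MunariniMedian

/-! ### Blocks -/

lemma length_blockA {k i : ℕ} (hi : i ≤ k) : (blockA k i).length = k := by
  unfold blockA
  split
  · simp
  · simp only [List.length_append, List.length_replicate, List.length_cons]
    omega

lemma getD_replicate {α : Type*} (a d : α) : ∀ (n p : ℕ),
    (List.replicate n a).getD p d = if p < n then a else d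
  | 0, p => by simp
  | n+1, 0 => by simp
  | n+1, p+1 => by
    rw [List.replicate_succ, List.getD_cons_succ, getD_replicate a d n p]
    simp only [Nat.add_lt_add_iff_right]

lemma blockA_getD {k i : ℕ} (hi : i ≤ k) (p : ℕ) (hp : p < k) :
    (blockA k i).getD p false = decide (p + 1 = i) := by
  unfold blockA
  split
  · next h =>
    subst h
    rw [getD_replicate, if_pos hp]
    symm; simp
  · next h =>
    rcases Nat.lt_or_ge p (i-1) with hlt | hge
    · rw [List.getD_append _ _ _ _ (by simpa using hlt), getD_replicate, if_pos hlt]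
      symm; simp; omega
    · rw [List.getD_append_right _ _ _ _ (by simpa using hge)]
      simp only [List.length_replicate]
      rcases h0 : p - (i-1) with _ | q
      · rw [List.getD_cons_zero]
        symm; simp
        omega
      · rw [List.getD_cons_succ, getD_replicate]
        have h1 : (if q < k - i then false else false) = false := by split <;> rfl
        rw [h1]
        symm; simp
        omega

lemma sum_indicator {k i : ℕ} (hi : i ≤ k) :
    (∑ p ∈ Finset.range k, if p + 1 = i then 1 else 0) = if i = 0 then 0 else 1 := by
  cases i with
  | zero => simp
  | succ i' =>
    have : ∀ p ∈ Finset.range k, (if p + 1 = i' + 1 then (1:ℕ) else 0) = if p = i' then 1 else 0 := by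
      intro p _; simp
    rw [Finset.sum_congr rfl this, Finset.sum_ite_eq' (Finset.range k) i' (fun _ => 1)]
    simp only [Finset.mem_range]
    rw [if_pos (by omega)]
    simp

lemma ham_blockA_ne {k i j : ℕ} (hi : i ≤ k) (hj : j ≤ k) (hij : i ≠ j) :
    ham (blockA k i) (blockA k j) = (if i = 0 then 0 else 1) + (if j = 0 then 0 else 1) := by
  rw [ham_eq_sum _ _ (by rw [length_blockA hi, length_blockA hj]), length_blockA hi]
  have : ∀ p ∈ Finset.range k,
      (if (blockA k i).getD p false = (blockA k j).getD p false then (0:ℕ) else 1)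
        = (if p + 1 = i then 1 else 0) + (if p + 1 = j then 1 else 0) := by
    intro p hp
    rw [Finset.mem_range] at hp
    rw [blockA_getD hi p hp, blockA_getD hj p hp]
    simp only [decide_eq_decide]
    split_ifs <;> omega
  rw [Finset.sum_congr rfl this, Finset.sum_add_distrib, sum_indicator hi, sum_indicator hj]

lemma blockA_inj {k i j : ℕ} (hi : i ≤ k) (hj : j ≤ k) (h : blockA k i = blockA k j) :
    i = j := by
  by_contra hij
  have h2 := ham_blockA_ne hi hj hij
  rw [h, ham_self] at h2
  split_ifs at h2 <;> omega

/-! ### maj3 -/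

def majB (a b c : Bool) : Bool := (a && b) || (a && c) || (b && c)

@[simp] lemma maj3_cons (a b c : Bool) (u v w : List Bool) :
    maj3 (a :: u) (b :: v) (c :: w) = majB a b c :: maj3 u v w := rfl

lemma length_maj3 : ∀ (u v w : List Bool), u.length = v.length → u.length = w.length →
    (maj3 u v w).length = u.length
  | [], [], [], _, _ => rfl
  | a :: u, b :: v, c :: w, h1, h2 => by
    simp only [maj3_cons, List.length_cons]
    rw [length_maj3 u v w (by simpa using h1) (by simpa using h2)]
  | [], b :: v, _, h1, _ => by simp at h1
  | [], [], c :: w, _, h2 => by simp at h2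
  | a :: u, [], _, h1, _ => by simp at h1
  | a :: u, b :: v, [], _, h2 => by simp at h2

lemma maj3_append (a b c u v w : List Bool) (h1 : a.length = b.length)
    (h2 : a.length = c.length) :
    maj3 (a ++ u) (b ++ v) (c ++ w) = maj3 a b c ++ maj3 u v w := by
  induction a generalizing b c with
  | nil =>
    cases b with
    | cons _ _ => simp at h1
    | nil =>
      cases c with
      | cons _ _ => simp at h2
      | nil => rfl
  | cons x a ih =>
    cases b with
    | nil => simp at h1
    | cons y b =>
      cases c with
      | nil => simp at h2
      | cons z c =>
        simp only [List.cons_append, maj3_cons]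
        rw [ih b c (by simpa using h1) (by simpa using h2)]

lemma maj3_getD : ∀ (u v w : List Bool), u.length = v.length → u.length = w.length →
    ∀ p, p < u.length →
    (maj3 u v w).getD p false = majB (u.getD p false) (v.getD p false) (w.getD p false)
  | a :: u, b :: v, c :: w, h1, h2, p, hp => by
    cases p with
    | zero => simp
    | succ p =>
      simp only [maj3_cons, List.getD_cons_succ]
      exact maj3_getD u v w (by simpa using h1) (by simpa using h2) p (by simpa using hp)
  | [], _, _, _, _, p, hp => by simp at hp
  | a :: u, [], _, h1, _, _, _ => by simp at h1
  | a :: u, b :: v, [], _, h2, _, _ => by simp at h2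

/-- Ternary majority on letters. -/
def majN (i j l : ℕ) : ℕ := if i = j then i else if i = l then i else if j = l then j else 0

lemma majN_le {k i j l : ℕ} (hi : i ≤ k) (hj : j ≤ k) (_ : l ≤ k) : majN i j l ≤ k := by
  unfold majN; split_ifs <;> omega

lemma maj3_blockA_point (i j l p : ℕ) :
    majB (decide (p+1=i)) (decide (p+1=j)) (decide (p+1=l)) = decide (p+1 = majN i j l) := by
  have h : majB (decide (p+1=i)) (decide (p+1=j)) (decide (p+1=l))
      = decide ((p+1=i ∧ p+1=j) ∨ (p+1=i ∧ p+1=l) ∨ (p+1=j ∧ p+1=l)) := by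
    simp [majB, Bool.or_assoc]
  rw [h, decide_eq_decide]
  unfold majN
  split_ifs with h1 h2 h3
  · subst h1
    exact ⟨fun e => by rcases e with ⟨e,_⟩|⟨e,_⟩|⟨e,_⟩ <;> omega, fun e => Or.inl ⟨e, e⟩⟩
  · subst h2
    exact ⟨fun e => by rcases e with ⟨e,_⟩|⟨e,_⟩|⟨f,e⟩ <;> omega, fun e => Or.inr (Or.inl ⟨e, e⟩)⟩
  · subst h3
    exact ⟨fun e => by rcases e with ⟨e,f⟩|⟨e,f⟩|⟨e,_⟩ <;> omega, fun e => Or.inr (Or.inr ⟨e, e⟩)⟩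
  · exact ⟨fun e => by rcases e with ⟨e,f⟩|⟨e,f⟩|⟨e,f⟩ <;> omega, fun e => e.elim⟩

lemma maj3_blockA {k i j l : ℕ} (hi : i ≤ k) (hj : j ≤ k) (hl : l ≤ k) :
    maj3 (blockA k i) (blockA k j) (blockA k l) = blockA k (majN i j l) := by
  have hm : majN i j l ≤ k := majN_le hi hj hl
  have li := length_blockA hi
  have lj := length_blockA hj
  have ll := length_blockA hl
  have lm := length_blockA hm
  apply List.ext_getElem (by rw [length_maj3 _ _ _ (by omega) (by omega)]; omega)
  intro p hp1 hp2
  have hpk : p < k := by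
    rw [length_maj3 _ _ _ (by omega) (by omega)] at hp1; omega
  rw [← List.getD_eq_getElem _ false hp1, ← List.getD_eq_getElem _ false hp2]
  rw [maj3_getD _ _ _ (by omega) (by omega) p (by omega)]
  rw [blockA_getD hi p hpk, blockA_getD hj p hpk, blockA_getD hl p hpk, blockA_getD hm p hpk]
  exact maj3_blockA_point i j l p

end MunariniMedian
namespace MunariniMedian

/-! ### psi basics -/

@[simp] lemma psi_nil (k : ℕ) : psi k [] = [] := rfl

lemma psi_cons_ne {k i : ℕ} (h : i ≠ k) (s : List ℕ) :
    psi k (i :: s) = blockA k i ++ psi k s := by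
  cases s with
  | nil => simp [psi]
  | cons j t => simp [psi, h]

lemma psi_kk (k : ℕ) (s : List ℕ) :
    psi k (k :: k :: s) = blockA k k ++ (blockA k 0 ++ psi k s) := by
  simp [psi]

lemma genpell_head {k x : ℕ} {s : List ℕ} (h : GenPell k (x :: s)) :
    (x < k ∧ GenPell k s) ∨ (x = k ∧ ∃ t, s = k :: t ∧ GenPell k t) := by
  cases h with
  | cons _ _ hi hs => exact Or.inl ⟨hi, hs⟩
  | kk t ht => exact Or.inr ⟨rfl, t, rfl, ht⟩

lemma genpell_append_split {k : ℕ} : ∀ {a : List ℕ} {c : ℕ} {b : List ℕ},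
    GenPell k (a ++ c :: b) → c ≠ k → GenPell k a ∧ GenPell k (c :: b)
  | [], c, b, h, _ => ⟨GenPell.nil, h⟩
  | x :: a, c, b, h, hc => by
    rcases genpell_head h with ⟨hx, hs⟩ | ⟨hx, t, ht, hgt⟩
    · obtain ⟨h1, h2⟩ := genpell_append_split hs hc
      exact ⟨GenPell.cons x a hx h1, h2⟩
    · subst hx
      cases a with
      | nil =>
        simp at ht
        exact absurd ht.1 hc
      | cons y a' =>
        simp at ht
        obtain ⟨rfl, rfl⟩ := ht
        obtain ⟨h1, h2⟩ := genpell_append_split hgt hc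
        exact ⟨GenPell.kk a' h1, h2⟩

lemma psi_append {k : ℕ} {a : List ℕ} (ha : GenPell k a) (b : List ℕ) :
    psi k (a ++ b) = psi k a ++ psi k b := by
  induction ha with
  | nil => simp
  | cons i s hi _ ih =>
    rw [List.cons_append, psi_cons_ne (Nat.ne_of_lt hi), ih,
      psi_cons_ne (Nat.ne_of_lt hi), List.append_assoc]
  | kk s _ ih =>
    rw [List.cons_append, List.cons_append, psi_kk, psi_kk, ih]
    simp [List.append_assoc]

lemma length_psi {k : ℕ} {u : List ℕ} (h : GenPell k u) :
    (psi k u).length = k * u.length := by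
  induction h with
  | nil => simp
  | cons i s hi _ ih =>
    rw [psi_cons_ne (Nat.ne_of_lt hi), List.length_append, ih,
      length_blockA (le_of_lt hi), List.length_cons, Nat.mul_succ]
    omega
  | kk s _ ih =>
    rw [psi_kk, List.length_append, List.length_append, ih,
      length_blockA (le_refl k), length_blockA (Nat.zero_le k)]
    simp only [List.length_cons, Nat.mul_succ]
    omega

/-! ### head/tail block decomposition -/

def hd1 : List ℕ → ℕ
  | [] => 0
  | a :: _ => a

def tl1 (k : ℕ) : List ℕ → List ℕ
  | [] => []
  | a :: s => if a = k then (match s with | [] => [] | _ :: s' => 0 :: s') else s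

lemma length_tl1_le (k : ℕ) : ∀ u : List ℕ, (tl1 k u).length ≤ u.length
  | [] => le_refl _
  | a :: s => by
    simp only [tl1]
    split
    · cases s with
      | nil => simp
      | cons b s' => simp
    · simp

lemma length_tl1_lt (k : ℕ) (u : List ℕ) (h : u ≠ []) : (tl1 k u).length < u.length := by
  cases u with
  | nil => exact absurd rfl h
  | cons a s =>
    simp only [tl1]
    split
    · cases s with
      | nil => simp
      | cons b s' => simp
    · simp

lemma pell_step {k : ℕ} (hk : 1 ≤ k) {s : List ℕ} (h : GenPell k s) (hne : s ≠ []) :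
    GenPell k (tl1 k s) ∧ (tl1 k s).length + 1 = s.length ∧
    psi k s = blockA k (hd1 s) ++ psi k (tl1 k s) ∧ hd1 s ≤ k ∧
    (hd1 s = k → hd1 (tl1 k s) = 0 ∧ tl1 k s ≠ []) := by
  cases h with
  | nil => exact absurd rfl hne
  | cons i s hi hs =>
    have hik : i ≠ k := Nat.ne_of_lt hi
    have htl : tl1 k (i :: s) = s := by simp [tl1, hik]
    refine ⟨by rwa [htl], by rw [htl]; simp, ?_, le_of_lt hi, fun hc => absurd hc hik⟩
    rw [htl]
    exact psi_cons_ne hik s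
  | kk s hs =>
    have h0k : (0 : ℕ) ≠ k := by omega
    have htl : tl1 k (k :: k :: s) = 0 :: s := by simp [tl1]
    refine ⟨?_, by rw [htl]; simp, ?_, le_refl k, fun _ => by rw [htl]; exact ⟨rfl, by simp⟩⟩
    · rw [htl]; exact GenPell.cons 0 s hk hs
    · rw [htl, psi_cons_ne h0k]
      exact psi_kk k s

/-! ### the median word -/

def pmed (k : ℕ) (u v w : List ℕ) : List ℕ :=
  if h : u = [] then []
  else if majN (hd1 u) (hd1 v) (hd1 w) = k then
    k :: k :: pmed k (tl1 k (tl1 k u)) (tl1 k (tl1 k v)) (tl1 k (tl1 k w))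
  else majN (hd1 u) (hd1 v) (hd1 w) :: pmed k (tl1 k u) (tl1 k v) (tl1 k w)
termination_by u.length
decreasing_by
  · exact lt_of_le_of_lt (length_tl1_le k _) (length_tl1_lt k _ h)
  · exact length_tl1_lt k _ h

end MunariniMedian
namespace MunariniMedian

lemma pmed_nil (k : ℕ) (v w : List ℕ) : pmed k [] v w = [] := by
  rw [pmed]; simp

lemma pmed_unfold (k : ℕ) (u v w : List ℕ) (h : u ≠ []) :
    pmed k u v w =
      if majN (hd1 u) (hd1 v) (hd1 w) = k then
        k :: k :: pmed k (tl1 k (tl1 k u)) (tl1 k (tl1 k v)) (tl1 k (tl1 k w))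
      else majN (hd1 u) (hd1 v) (hd1 w) :: pmed k (tl1 k u) (tl1 k v) (tl1 k w) := by
  rw [pmed, dif_neg h]

lemma pmed_spec {k : ℕ} (hk : 1 ≤ k) :
    ∀ n (u v w : List ℕ), GenPell k u → GenPell k v → GenPell k w →
      u.length = n → v.length = n → w.length = n →
      GenPell k (pmed k u v w) ∧ (pmed k u v w).length = n ∧
      psi k (pmed k u v w) = maj3 (psi k u) (psi k v) (psi k w) := by
  intro n
  induction n using Nat.strong_induction_on with
  | _ n ih =>
  intro u v w hu hv hw hlu hlv hlw
  rcases Nat.eq_zero_or_pos n with rfl | hn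
  · obtain rfl := List.length_eq_zero_iff.mp hlu
    obtain rfl := List.length_eq_zero_iff.mp hlv
    obtain rfl := List.length_eq_zero_iff.mp hlw
    rw [pmed_nil]
    exact ⟨GenPell.nil, rfl, rfl⟩
  · have hune : u ≠ [] := by intro e; rw [e] at hlu; simp at hlu; omega
    have hvne : v ≠ [] := by intro e; rw [e] at hlv; simp at hlv; omega
    have hwne : w ≠ [] := by intro e; rw [e] at hlw; simp at hlw; omega
    obtain ⟨hu1, hu2, hu3, hu4, hu5⟩ := pell_step hk hu hune
    obtain ⟨hv1, hv2, hv3, hv4, hv5⟩ := pell_step hk hv hvne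
    obtain ⟨hw1, hw2, hw3, hw4, hw5⟩ := pell_step hk hw hwne
    rw [pmed_unfold k u v w hune]
    by_cases hm : majN (hd1 u) (hd1 v) (hd1 w) = k
    · rw [if_pos hm]
      have h2 : (hd1 u = k ∧ hd1 v = k) ∨ (hd1 u = k ∧ hd1 w = k) ∨
          (hd1 v = k ∧ hd1 w = k) := by
        unfold majN at hm; split_ifs at hm <;> omega
      have hn2 : 2 ≤ n := by
        rcases h2 with ⟨h, _⟩ | ⟨h, _⟩ | ⟨h, _⟩
        · have h5 := (hu5 h).2
          have := List.length_pos_iff.mpr h5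
          omega
        · have h5 := (hu5 h).2
          have := List.length_pos_iff.mpr h5
          omega
        · have h5 := (hv5 h).2
          have := List.length_pos_iff.mpr h5
          omega
      have hu1ne : tl1 k u ≠ [] := List.length_pos_iff.mp (by omega)
      have hv1ne : tl1 k v ≠ [] := List.length_pos_iff.mp (by omega)
      have hw1ne : tl1 k w ≠ [] := List.length_pos_iff.mp (by omega)
      obtain ⟨hu21, hu22, hu23, hu24, hu25⟩ := pell_step hk hu1 hu1ne
      obtain ⟨hv21, hv22, hv23, hv24, hv25⟩ := pell_step hk hv1 hv1ne
      obtain ⟨hw21, hw22, hw23, hw24, hw25⟩ := pell_step hk hw1 hw1ne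
      have hsec : majN (hd1 (tl1 k u)) (hd1 (tl1 k v)) (hd1 (tl1 k w)) = 0 := by
        rcases h2 with ⟨ha, hb⟩ | ⟨ha, hb⟩ | ⟨ha, hb⟩
        · have e1 := (hu5 ha).1; have e2 := (hv5 hb).1
          unfold majN; split_ifs <;> omega
        · have e1 := (hu5 ha).1; have e2 := (hw5 hb).1
          unfold majN; split_ifs <;> omega
        · have e1 := (hv5 ha).1; have e2 := (hw5 hb).1
          unfold majN; split_ifs <;> omega
      obtain ⟨hg, hl, hpsi⟩ := ih (n - 2) (by omega) _ _ _ hu21 hv21 hw21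
        (by omega) (by omega) (by omega)
      refine ⟨GenPell.kk _ hg, by simp [hl]; omega, ?_⟩
      rw [psi_kk, hpsi, hu3, hv3, hw3, hu23, hv23, hw23]
      rw [maj3_append _ _ _ _ _ _
          (by rw [length_blockA hu4, length_blockA hv4])
          (by rw [length_blockA hu4, length_blockA hw4])]
      rw [maj3_append _ _ _ _ _ _
          (by rw [length_blockA hu24, length_blockA hv24])
          (by rw [length_blockA hu24, length_blockA hw24])]
      rw [maj3_blockA hu4 hv4 hw4, maj3_blockA hu24 hv24 hw24, hm, hsec]
    · rw [if_neg hm]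
      have hmlt : majN (hd1 u) (hd1 v) (hd1 w) < k :=
        lt_of_le_of_ne (majN_le hu4 hv4 hw4) hm
      obtain ⟨hg, hl, hpsi⟩ := ih (n - 1) (by omega) _ _ _ hu1 hv1 hw1
        (by omega) (by omega) (by omega)
      refine ⟨GenPell.cons _ _ hmlt hg, by simp [hl]; omega, ?_⟩
      rw [psi_cons_ne (Nat.ne_of_lt hmlt), hpsi, hu3, hv3, hw3]
      rw [maj3_append _ _ _ _ _ _
          (by rw [length_blockA hu4, length_blockA hv4])
          (by rw [length_blockA hu4, length_blockA hw4])]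
      rw [maj3_blockA hu4 hv4 hw4]

end MunariniMedian
namespace MunariniMedian

open SimpleGraph

lemma genpell_cons_elim {k c : ℕ} {b : List ℕ} (h : GenPell k (c :: b)) (hc : c ≠ k) :
    GenPell k b := by
  rcases genpell_head h with ⟨_, hb⟩ | ⟨e, _⟩
  · exact hb
  · exact absurd e hc

lemma rel_ham {k : ℕ} (hk : 1 ≤ k) {u v : List ℕ} (hu : GenPell k u)
    (h : munariniRel k u v) : ham (psi k u) (psi k v) = 1 := by
  have h0k : (0 : ℕ) ≠ k := by omega
  rcases h with ⟨a, b, i, hi0, hik, rfl, rfl⟩ | ⟨a, b, rfl, rfl⟩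
  · obtain ⟨ha, h0b⟩ := genpell_append_split hu h0k
    rw [psi_append ha, psi_append ha, psi_cons_ne h0k, psi_cons_ne (show i ≠ k by omega)]
    rw [ham_append _ _ _ rfl,
      ham_append _ _ _ (by rw [length_blockA (Nat.zero_le k), length_blockA (le_of_lt hik)]),
      ham_self, ham_self, ham_blockA_ne (Nat.zero_le k) (le_of_lt hik) (by omega),
      if_pos rfl, if_neg (by omega)]
  · obtain ⟨ha, h00b⟩ := genpell_append_split hu h0k
    rw [psi_append ha, psi_append ha, psi_kk, psi_cons_ne h0k, psi_cons_ne h0k]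
    rw [ham_append _ _ _ rfl,
      ham_append _ _ _ (by rw [length_blockA (Nat.zero_le k), length_blockA (le_refl k)]),
      ham_self, ham_self, ham_blockA_ne (Nat.zero_le k) (le_refl k) h0k,
      if_pos rfl, if_neg (by omega)]

lemma munarini_adj_iff {n k : ℕ} (a b : PellVtx n k) :
    (MunariniGraph n k).Adj a b ↔
      a.val ≠ b.val ∧ (munariniRel k a.val b.val ∨ munariniRel k b.val a.val) := by
  show (SimpleGraph.fromRel _).Adj a b ↔ _
  rw [SimpleGraph.fromRel_adj]
  constructor
  · rintro ⟨h1, h2⟩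
    exact ⟨fun e => h1 (Subtype.ext e), h2⟩
  · rintro ⟨h1, h2⟩
    exact ⟨fun e => h1 (congrArg Subtype.val e), h2⟩

lemma adj_ham {n k : ℕ} (hk : 1 ≤ k) {u v : PellVtx n k}
    (h : (MunariniGraph n k).Adj u v) : ham (psi k u.1) (psi k v.1) = 1 := by
  rw [munarini_adj_iff] at h
  rcases h.2 with hr | hr
  · exact rel_ham hk u.2.2 hr
  · rw [ham_comm]
    exact rel_ham hk v.2.2 hr

lemma ham_le_walk {n k : ℕ} (hk : 1 ≤ k) {u v : PellVtx n k}
    (p : (MunariniGraph n k).Walk u v) : ham (psi k u.1) (psi k v.1) ≤ p.length := by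
  induction p with
  | nil => simp
  | @cons a b c h p ih =>
    have he := adj_ham hk h
    have tri := ham_triangle (psi k a.1) (psi k c.1) (psi k b.1)
      (by rw [length_psi a.2.2, length_psi b.2.2, a.2.1, b.2.1])
    rw [SimpleGraph.Walk.length_cons]
    omega

lemma munariniRel_cons {k : ℕ} (c : ℕ) {x y : List ℕ} (h : munariniRel k x y) :
    munariniRel k (c :: x) (c :: y) := by
  rcases h with ⟨a, b, i, h1, h2, rfl, rfl⟩ | ⟨a, b, rfl, rfl⟩
  · exact Or.inl ⟨c :: a, b, i, h1, h2, rfl, rfl⟩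
  · exact Or.inr ⟨c :: a, b, rfl, rfl⟩

def consHom {k : ℕ} (i : ℕ) (hi : i < k) (m : ℕ) :
    MunariniGraph m k →g MunariniGraph (m + 1) k where
  toFun := fun s => ⟨i :: s.1, by simp [s.2.1], GenPell.cons i s.1 hi s.2.2⟩
  map_rel' := by
    intro a b hab
    rw [munarini_adj_iff] at hab
    rw [munarini_adj_iff]
    refine ⟨?_, ?_⟩
    · intro e
      simp only [List.cons.injEq] at e
      exact hab.1 e.2
    · rcases hab.2 with h | h
      · exact Or.inl (munariniRel_cons i h)
      · exact Or.inr (munariniRel_cons i h)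

def kkHom {k : ℕ} (hk : 1 ≤ k) (m : ℕ) :
    MunariniGraph m k →g MunariniGraph (m + 2) k where
  toFun := fun s => ⟨k :: k :: s.1, by simp [s.2.1], GenPell.kk s.1 s.2.2⟩
  map_rel' := by
    intro a b hab
    rw [munarini_adj_iff] at hab
    rw [munarini_adj_iff]
    refine ⟨?_, ?_⟩
    · intro e
      simp only [List.cons.injEq] at e
      exact hab.1 e.2.2
    · rcases hab.2 with h | h
      · exact Or.inl (munariniRel_cons k (munariniRel_cons k h))
      · exact Or.inr (munariniRel_cons k (munariniRel_cons k h))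

/-- Geodesic between two vertices differing only in the head letter (both `< k`). -/
lemma head_path {k : ℕ} (hk : 1 ≤ k) {t : List ℕ} (ht : GenPell k t) (i j : ℕ)
    (hi : i < k) (hj : j < k) (N : ℕ) (hN : t.length + 1 = N) :
    ∃ p : (MunariniGraph N k).Walk
        ⟨i :: t, by rw [List.length_cons]; exact hN, GenPell.cons i t hi ht⟩
        ⟨j :: t, by rw [List.length_cons]; exact hN, GenPell.cons j t hj ht⟩,
      p.length = ham (blockA k i) (blockA k j) := by
  subst hN
  by_cases hij : i = j
  · subst hij
    exact ⟨SimpleGraph.Walk.nil.copy rfl (Subtype.ext rfl), by simp⟩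
  · have hham := ham_blockA_ne (le_of_lt hi) (le_of_lt hj) hij
    by_cases hi0 : i = 0
    · subst hi0
      have e : (MunariniGraph (t.length + 1) k).Adj
          ⟨0 :: t, rfl, GenPell.cons 0 t hi ht⟩ ⟨j :: t, rfl, GenPell.cons j t hj ht⟩ := by
        rw [munarini_adj_iff]
        refine ⟨by simp; omega, Or.inl (Or.inl ⟨[], t, j, by omega, hj, rfl, rfl⟩)⟩
      refine ⟨SimpleGraph.Walk.cons e SimpleGraph.Walk.nil, ?_⟩
      rw [hham, if_pos rfl, if_neg (Ne.symm hij)]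
      simp
    · by_cases hj0 : j = 0
      · subst hj0
        have e : (MunariniGraph (t.length + 1) k).Adj
            ⟨i :: t, rfl, GenPell.cons i t hi ht⟩ ⟨0 :: t, rfl, GenPell.cons 0 t hj ht⟩ := by
          rw [munarini_adj_iff]
          refine ⟨by simp; omega, Or.inr (Or.inl ⟨[], t, i, by omega, hi, rfl, rfl⟩)⟩
        refine ⟨SimpleGraph.Walk.cons e SimpleGraph.Walk.nil, ?_⟩
        rw [hham, if_pos rfl, if_neg hi0]
        simp
      · have h0 : (0 : ℕ) < k := hk
        have e1 : (MunariniGraph (t.length + 1) k).Adj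
            ⟨i :: t, rfl, GenPell.cons i t hi ht⟩ ⟨0 :: t, rfl, GenPell.cons 0 t h0 ht⟩ := by
          rw [munarini_adj_iff]
          refine ⟨by simp; omega, Or.inr (Or.inl ⟨[], t, i, by omega, hi, rfl, rfl⟩)⟩
        have e2 : (MunariniGraph (t.length + 1) k).Adj
            ⟨0 :: t, rfl, GenPell.cons 0 t h0 ht⟩ ⟨j :: t, rfl, GenPell.cons j t hj ht⟩ := by
          rw [munarini_adj_iff]
          refine ⟨by simp; omega, Or.inl (Or.inl ⟨[], t, j, by omega, hj, rfl, rfl⟩)⟩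
        refine ⟨SimpleGraph.Walk.cons e1 (SimpleGraph.Walk.cons e2 SimpleGraph.Walk.nil), ?_⟩
        rw [hham, if_neg hi0, if_neg hj0]
        simp

end MunariniMedian
namespace MunariniMedian

lemma walk_kk_to_cons {k : ℕ} (hk : 1 ≤ k) {s t : List ℕ} {j : ℕ} (hj : j < k)
    (hs : GenPell k s) (ht : GenPell k t) (hlt : t.length = s.length + 1)
    (N : ℕ) (hN : s.length + 2 = N)
    (q : (MunariniGraph (s.length + 1) k).Walk
        ⟨0 :: s, rfl, GenPell.cons 0 s hk hs⟩ ⟨t, by simp [hlt], ht⟩)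
    (hq : q.length = ham (psi k (0 :: s)) (psi k t)) :
    ∃ p : (MunariniGraph N k).Walk
        ⟨k :: k :: s, by simp; omega, GenPell.kk s hs⟩
        ⟨j :: t, by simp; omega, GenPell.cons j t hj ht⟩,
      p.length = ham (psi k (k :: k :: s)) (psi k (j :: t)) := by
  subst hN
  have h0k : (0 : ℕ) ≠ k := by omega
  have e1 : (MunariniGraph (s.length + 2) k).Adj
      ⟨k :: k :: s, by simp, GenPell.kk s hs⟩
      ⟨0 :: 0 :: s, by simp, GenPell.cons 0 _ hk (GenPell.cons 0 _ hk hs)⟩ := by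
    rw [munarini_adj_iff]
    exact ⟨by simp; omega, Or.inr (Or.inr ⟨[], s, rfl, rfl⟩)⟩
  obtain ⟨p2, hp2⟩ := head_path hk ht 0 j hk hj (s.length + 2) (by omega)
  refine ⟨SimpleGraph.Walk.cons e1
    (((q.map (consHom 0 hk (s.length + 1))).copy (Subtype.ext rfl)
      (Subtype.ext rfl) (u' := ⟨0 :: 0 :: s, by simp, GenPell.cons 0 _ hk (GenPell.cons 0 _ hk hs)⟩)
      (v' := ⟨0 :: t, by simp [hlt], GenPell.cons 0 t hk ht⟩)).append p2), ?_⟩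
  rw [SimpleGraph.Walk.length_cons, SimpleGraph.Walk.length_append,
    SimpleGraph.Walk.length_copy, SimpleGraph.Walk.length_map, hq, hp2]
  have v1 : ham (blockA k k) (blockA k j) = 1 + (if j = 0 then 0 else 1) := by
    rw [ham_blockA_ne (le_refl k) (le_of_lt hj) (by omega), if_neg (by omega : k ≠ 0)]
  have v2 : ham (blockA k 0) (blockA k j) = (if j = 0 then 0 else 1) := by
    by_cases hj0 : j = 0
    · subst hj0; rw [ham_self, if_pos rfl]
    · rw [ham_blockA_ne (Nat.zero_le k) (le_of_lt hj) (Ne.symm hj0), if_pos rfl, if_neg hj0]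
  have main : ham (psi k (k :: k :: s)) (psi k (j :: t))
      = ham (blockA k k) (blockA k j) + ham (psi k (0 :: s)) (psi k t) := by
    rw [psi_kk, psi_cons_ne (Nat.ne_of_lt hj), psi_cons_ne h0k,
      ham_append _ _ _ (by rw [length_blockA (le_refl k), length_blockA (le_of_lt hj)])]
  rw [main, v1, v2]
  omega

lemma exists_walk_aux {k : ℕ} (hk : 1 ≤ k) :
    ∀ (N : ℕ) (ul vl : List ℕ) (hu : GenPell k ul) (hv : GenPell k vl)
      (hlen : vl.length = ul.length), ul.length = N →
      ∃ p : (MunariniGraph ul.length k).Walk ⟨ul, rfl, hu⟩ ⟨vl, hlen, hv⟩,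
        p.length = ham (psi k ul) (psi k vl) := by
  intro N
  induction N using Nat.strong_induction_on with
  | _ N ih =>
  intro ul vl hu hv hlen hN
  cases hu with
  | nil =>
    obtain rfl : vl = [] := List.length_eq_zero_iff.mp (by simpa using hlen)
    exact ⟨SimpleGraph.Walk.nil.copy rfl (Subtype.ext rfl), by simp⟩
  | cons i s hi hs =>
    cases hv with
    | nil => exact absurd hlen (by simp)
    | cons j t hj ht =>
      have hts : t.length = s.length := by simpa using hlen
      have hsN : s.length < N := by simp at hN; omega
      obtain ⟨q, hq⟩ := ih s.length hsN s t hs ht hts rfl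
      obtain ⟨p2, hp2⟩ := head_path hk ht i j hi hj ((i :: s).length) (by simp [hts])
      refine ⟨((q.map (consHom i hi s.length)).copy (Subtype.ext rfl)
        (Subtype.ext rfl) (u' := ⟨i :: s, rfl, GenPell.cons i s hi hs⟩)
        (v' := ⟨i :: t, by simp [hts], GenPell.cons i t hi ht⟩)).append p2, ?_⟩
      rw [SimpleGraph.Walk.length_append, SimpleGraph.Walk.length_copy,
        SimpleGraph.Walk.length_map, hq, hp2]
      rw [psi_cons_ne (Nat.ne_of_lt hi), psi_cons_ne (Nat.ne_of_lt hj),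
        ham_append _ _ _ (by rw [length_blockA (le_of_lt hi), length_blockA (le_of_lt hj)])]
      omega
    | kk t ht =>
      have hst : s.length = t.length + 1 := by simp at hlen; omega
      have htN : t.length + 1 < N := by simp at hN; omega
      obtain ⟨q, hq⟩ := ih (t.length + 1) htN (0 :: t) s (GenPell.cons 0 t hk ht) hs
        (by simpa using hst) rfl
      obtain ⟨p, hp⟩ := walk_kk_to_cons hk hi ht hs hst ((i :: s).length)
        (by simp; omega) q hq
      refine ⟨(p.reverse).copy (Subtype.ext rfl) (Subtype.ext rfl), ?_⟩
      rw [SimpleGraph.Walk.length_copy, SimpleGraph.Walk.length_reverse, hp, ham_comm]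
  | kk s hs =>
    cases hv with
    | nil => exact absurd hlen (by simp)
    | cons j t hj ht =>
      have hts : t.length = s.length + 1 := by simp at hlen; omega
      have hsN : s.length + 1 < N := by simp at hN; omega
      obtain ⟨q, hq⟩ := ih (s.length + 1) hsN (0 :: s) t (GenPell.cons 0 s hk hs) ht
        (by simpa using hts) rfl
      obtain ⟨p, hp⟩ := walk_kk_to_cons hk hj hs ht hts ((k :: k :: s).length)
        (by simp) q hq
      exact ⟨p.copy (Subtype.ext rfl) (Subtype.ext rfl),
        by rw [SimpleGraph.Walk.length_copy, hp]⟩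
    | kk t ht =>
      have hts : t.length = s.length := by simpa using hlen
      have hsN : s.length < N := by simp at hN; omega
      obtain ⟨q, hq⟩ := ih s.length hsN s t hs ht hts rfl
      refine ⟨(q.map (kkHom hk s.length)).copy (Subtype.ext rfl) (Subtype.ext rfl), ?_⟩
      rw [SimpleGraph.Walk.length_copy, SimpleGraph.Walk.length_map, hq, psi_kk, psi_kk,
        ham_append _ _ _ (by rw [length_blockA (le_refl k)]),
        ham_append _ _ _ (by rw [length_blockA (Nat.zero_le k)]),
        ham_self, ham_self]
      omega

end MunariniMedian
namespace MunariniMedian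

lemma dist_eq {n k : ℕ} (hk : 1 ≤ k) (u v : PellVtx n k) :
    (MunariniGraph n k).dist u v = ham (psi k u.1) (psi k v.1) := by
  obtain ⟨ul, hul, hug⟩ := u
  obtain ⟨vl, hvl, hvg⟩ := v
  subst hul
  obtain ⟨p, hp⟩ := exists_walk_aux hk ul.length ul vl hug hvg hvl rfl
  apply le_antisymm
  · exact hp ▸ SimpleGraph.dist_le p
  · have hre : (MunariniGraph ul.length k).Reachable ⟨ul, rfl, hug⟩ ⟨vl, hvl, hvg⟩ := ⟨p⟩
    obtain ⟨q, hq⟩ := hre.exists_walk_length_eq_dist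
    exact hq ▸ ham_le_walk hk q

lemma psi_inj {k : ℕ} : ∀ {u : List ℕ}, GenPell k u → ∀ {v : List ℕ}, GenPell k v →
    u.length = v.length → psi k u = psi k v → u = v := by
  intro u hu
  induction hu with
  | nil =>
    intro v hv hl _
    obtain rfl : v = [] := List.length_eq_zero_iff.mp hl.symm
    rfl
  | cons i s hi hs ih =>
    intro v hv
    cases hv with
    | nil => intro hl; simp at hl
    | cons j t hj ht =>
      intro hl hpsi
      rw [psi_cons_ne (Nat.ne_of_lt hi), psi_cons_ne (Nat.ne_of_lt hj)] at hpsi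
      obtain ⟨hb, hrest⟩ := List.append_inj hpsi
        (by rw [length_blockA (le_of_lt hi), length_blockA (le_of_lt hj)])
      obtain rfl : i = j := blockA_inj (le_of_lt hi) (le_of_lt hj) hb
      rw [ih ht (by simpa using hl) hrest]
    | kk t ht =>
      intro hl hpsi
      rw [psi_cons_ne (Nat.ne_of_lt hi), psi_kk] at hpsi
      obtain ⟨hb, -⟩ := List.append_inj hpsi
        (by rw [length_blockA (le_of_lt hi), length_blockA (le_refl k)])
      exact absurd (blockA_inj (le_of_lt hi) (le_refl k) hb) (Nat.ne_of_lt hi)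
  | kk s hs ih =>
    intro v hv
    cases hv with
    | nil => intro hl; simp at hl
    | cons j t hj ht =>
      intro hl hpsi
      rw [psi_kk, psi_cons_ne (Nat.ne_of_lt hj)] at hpsi
      obtain ⟨hb, -⟩ := List.append_inj hpsi
        (by rw [length_blockA (le_refl k), length_blockA (le_of_lt hj)])
      exact absurd (blockA_inj (le_refl k) (le_of_lt hj) hb).symm (Nat.ne_of_lt hj)
    | kk t ht =>
      intro hl hpsi
      rw [psi_kk, psi_kk] at hpsi
      obtain ⟨-, h2⟩ := List.append_inj hpsi (by rw [length_blockA (le_refl k)])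
      obtain ⟨-, h3⟩ := List.append_inj h2 (by rw [length_blockA (Nat.zero_le k)])
      rw [ih ht (by simpa using hl) h3]

lemma ham_maj3_1 : ∀ (a b c : List Bool), a.length = b.length → a.length = c.length →
    ham a b = ham a (maj3 a b c) + ham (maj3 a b c) b
  | [], [], [], _, _ => by simp
  | x :: a, y :: b, z :: c, h1, h2 => by
    have ih := ham_maj3_1 a b c (by simpa using h1) (by simpa using h2)
    simp only [maj3_cons, ham_cons]
    have hhead : (if x = y then (0:ℕ) else 1)
        = (if x = majB x y z then 0 else 1) + (if majB x y z = y then 0 else 1) := by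
      cases x <;> cases y <;> cases z <;> simp [majB]
    omega
  | [], y :: b, _, h1, _ => by simp at h1
  | [], [], z :: c, _, h2 => by simp at h2
  | x :: a, [], _, h1, _ => by simp at h1
  | x :: a, y :: b, [], _, h2 => by simp at h2

lemma ham_maj3_2 : ∀ (a b c : List Bool), a.length = b.length → a.length = c.length →
    ham a c = ham a (maj3 a b c) + ham (maj3 a b c) c
  | [], [], [], _, _ => by simp
  | x :: a, y :: b, z :: c, h1, h2 => by
    have ih := ham_maj3_2 a b c (by simpa using h1) (by simpa using h2)
    simp only [maj3_cons, ham_cons]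
    have hhead : (if x = z then (0:ℕ) else 1)
        = (if x = majB x y z then 0 else 1) + (if majB x y z = z then 0 else 1) := by
      cases x <;> cases y <;> cases z <;> simp [majB]
    omega
  | [], y :: b, _, h1, _ => by simp at h1
  | [], [], z :: c, _, h2 => by simp at h2
  | x :: a, [], _, h1, _ => by simp at h1
  | x :: a, y :: b, [], _, h2 => by simp at h2

lemma ham_maj3_3 : ∀ (a b c : List Bool), a.length = b.length → a.length = c.length →
    ham b c = ham b (maj3 a b c) + ham (maj3 a b c) c
  | [], [], [], _, _ => by simp
  | x :: a, y :: b, z :: c, h1, h2 => by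
    have ih := ham_maj3_3 a b c (by simpa using h1) (by simpa using h2)
    simp only [maj3_cons, ham_cons]
    have hhead : (if y = z then (0:ℕ) else 1)
        = (if y = majB x y z then 0 else 1) + (if majB x y z = z then 0 else 1) := by
      cases x <;> cases y <;> cases z <;> simp [majB]
    omega
  | [], y :: b, _, h1, _ => by simp at h1
  | [], [], z :: c, _, h2 => by simp at h2
  | x :: a, [], _, h1, _ => by simp at h1
  | x :: a, y :: b, [], _, h2 => by simp at h2

lemma median_unique_bool : ∀ (a b c y : List Bool), a.length = b.length →
    a.length = c.length → a.length = y.length →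
    ham a b = ham a y + ham y b → ham a c = ham a y + ham y c →
    ham b c = ham b y + ham y c → y = maj3 a b c
  | [], b, c, y, h1, h2, h3, _, _, _ => by
    obtain rfl : b = [] := List.length_eq_zero_iff.mp h1.symm
    obtain rfl : c = [] := List.length_eq_zero_iff.mp h2.symm
    obtain rfl : y = [] := List.length_eq_zero_iff.mp h3.symm
    rfl
  | x :: a, [], _, _, h1, _, _, _, _, _ => by simp at h1
  | x :: a, _ :: _, [], _, _, h2, _, _, _, _ => by simp at h2
  | x :: a, _ :: _, _ :: _, [], _, _, h3, _, _, _ => by simp at h3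
  | x :: a, y0 :: b, z :: c, e :: y, h1, h2, h3, q1, q2, q3 => by
    have l1 : a.length = b.length := by simpa using h1
    have l2 : a.length = c.length := by simpa using h2
    have l3 : a.length = y.length := by simpa using h3
    have t1 := ham_triangle a b y l3
    have t2 := ham_triangle a c y l3
    have t3 := ham_triangle b c y (by omega)
    have s1 : (if x = y0 then (0:ℕ) else 1)
        ≤ (if x = e then 0 else 1) + (if e = y0 then 0 else 1) := by
      cases x <;> cases y0 <;> cases e <;> simp
    have s2 : (if x = z then (0:ℕ) else 1)
        ≤ (if x = e then 0 else 1) + (if e = z then 0 else 1) := by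
      cases x <;> cases z <;> cases e <;> simp
    have s3 : (if y0 = z then (0:ℕ) else 1)
        ≤ (if y0 = e then 0 else 1) + (if e = z then 0 else 1) := by
      cases y0 <;> cases z <;> cases e <;> simp
    simp only [ham_cons] at q1 q2 q3
    have q1' : ham a b = ham a y + ham y b := by omega
    have q2' : ham a c = ham a y + ham y c := by omega
    have q3' : ham b c = ham b y + ham y c := by omega
    have hd1 : (if x = y0 then (0:ℕ) else 1)
        = (if x = e then 0 else 1) + (if e = y0 then 0 else 1) := by omega
    have hd2 : (if x = z then (0:ℕ) else 1)
        = (if x = e then 0 else 1) + (if e = z then 0 else 1) := by omega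
    have hd3 : (if y0 = z then (0:ℕ) else 1)
        = (if y0 = e then 0 else 1) + (if e = z then 0 else 1) := by omega
    have ht := median_unique_bool a b c y l1 l2 l3 q1' q2' q3'
    have hhead : e = majB x y0 z := by
      cases x <;> cases y0 <;> cases z <;> cases e <;> simp_all [majB]
    rw [maj3_cons, hhead, ht]

end MunariniMedian

/-- `M_{n,k}` is a median graph: every triple of vertices has a unique median. -/
theorem munarini_median_graph (n k : ℕ) (hn : 1 ≤ n) (hk : 1 ≤ k) :
    ∀ u v w : PellVtx n k,
      ∃! x : PellVtx n k,
        (MunariniGraph n k).dist u v =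
            (MunariniGraph n k).dist u x + (MunariniGraph n k).dist x v ∧
        (MunariniGraph n k).dist u w =
            (MunariniGraph n k).dist u x + (MunariniGraph n k).dist x w ∧
        (MunariniGraph n k).dist v w =
            (MunariniGraph n k).dist v x + (MunariniGraph n k).dist x w := by
  intro u v w
  obtain ⟨hxg, hxl, hxpsi⟩ := MunariniMedian.pmed_spec hk n u.1 v.1 w.1 u.2.2 v.2.2 w.2.2
    u.2.1 v.2.1 w.2.1
  have la : (psi k u.1).length = k * n := by rw [MunariniMedian.length_psi u.2.2, u.2.1]
  have lb : (psi k v.1).length = k * n := by rw [MunariniMedian.length_psi v.2.2, v.2.1]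
  have lc : (psi k w.1).length = k * n := by rw [MunariniMedian.length_psi w.2.2, w.2.1]
  refine ⟨⟨MunariniMedian.pmed k u.1 v.1 w.1, hxl, hxg⟩, ⟨?_, ?_, ?_⟩, ?_⟩
  · simp only [MunariniMedian.dist_eq hk, hxpsi]
    exact MunariniMedian.ham_maj3_1 _ _ _ (by omega) (by omega)
  · simp only [MunariniMedian.dist_eq hk, hxpsi]
    exact MunariniMedian.ham_maj3_2 _ _ _ (by omega) (by omega)
  · simp only [MunariniMedian.dist_eq hk, hxpsi]
    exact MunariniMedian.ham_maj3_3 _ _ _ (by omega) (by omega)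
  · rintro y ⟨d1, d2, d3⟩
    simp only [MunariniMedian.dist_eq hk] at d1 d2 d3
    have ly : (psi k y.1).length = k * n := by rw [MunariniMedian.length_psi y.2.2, y.2.1]
    have hy := MunariniMedian.median_unique_bool (psi k u.1) (psi k v.1) (psi k w.1) (psi k y.1)
      (by omega) (by omega) (by omega) d1 d2 d3
    rw [← hxpsi] at hy
    exact Subtype.ext (MunariniMedian.psi_inj y.2.2 hxg (by rw [y.2.1, hxl]) hy)
end
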